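/- arXiv:0903.1169 — 3 statements merged into one kernel-verified Lean document; each statement's English description precedes it below -/
import Mathlib

section
/- Let S be a spray on M, k a nonzero integer, and θ a semi-basic, positively (k−1)-homogeneous, d_J-closed 1-form on TM \ {0}. Then L = (1/k) i_S θ is the unique positively k-homogeneous function with d_J L = θ. -/
/- We work in induced coordinates on the tangent bundle `TM` of an `n`-dimensional
manifold: points of `TM` are pairs `p = (x, y) ∈ ℝⁿ × ℝⁿ`, the slit tangent bundle
`TM \ {0}` is `{p | p.2 ≠ 0}`, vector fields are maps `X : ℝⁿ × ℝⁿ → ℝⁿ × ℝⁿ`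
(components in the frame `∂/∂xⁱ, ∂/∂yⁱ`), and the canonical tangent structure acts
pointwise by `J(a,b) = (0,a)`. -/

noncomputable section

/-- Coordinate model of `TM`. -/
abbrev TB (n : ℕ) := (Fin n → ℝ) × (Fin n → ℝ)

/-- The slit tangent bundle `TM \ {0}`. -/
def Slit (n : ℕ) : Set (TB n) := {p | p.2 ≠ 0}

/-- Lie bracket of vector fields: `[X,Y] = DY·X − DX·Y`. -/
def lie {n : ℕ} (X Y : TB n → TB n) : TB n → TB n :=
  fun p => fderiv ℝ Y p (X p) - fderiv ℝ X p (Y p)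

/-- The canonical tangent structure `J = (∂/∂yⁱ) ⊗ dxⁱ` acting on vector fields. -/
def Jop {n : ℕ} (X : TB n → TB n) : TB n → TB n := fun p => (0, (X p).1)

/-- The Liouville (dilation) vector field `C = yⁱ ∂/∂yⁱ`. -/
def LiouvilleVF {n : ℕ} : TB n → TB n := fun p => (0, p.2)

/-- The semispray with coefficients `Gⁱ`: `S = yⁱ ∂/∂xⁱ − 2Gⁱ ∂/∂yⁱ`. -/
def semispray {n : ℕ} (G : TB n → (Fin n → ℝ)) : TB n → TB n :=
  fun p => (p.2, -(2 • G p))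

/-- The Lie derivative `L_S J`, acting on a vector field by `(L_S J)X = [S,JX] − J[S,X]`. -/
def LSJ {n : ℕ} (S X : TB n → TB n) : TB n → TB n := lie S (Jop X) - Jop (lie S X)

/-- The horizontal projector `h = (1/2)(Id − L_S J)` of a semispray `S`. -/
def hop {n : ℕ} (S X : TB n → TB n) : TB n → TB n := (1/2 : ℝ) • (X - LSJ S X)

/-- The vertical projector `v = (1/2)(Id + L_S J)` of a semispray `S`. -/
def vop {n : ℕ} (S X : TB n → TB n) : TB n → TB n := (1/2 : ℝ) • (X + LSJ S X)

/-- Evaluation of a `1`-form (field of linear functionals) on a vector field. -/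
def evalOne {n : ℕ} (θ : TB n → (TB n →L[ℝ] ℝ)) (X : TB n → TB n) : TB n → ℝ :=
  fun p => θ p (X p)

/-- Action of a vector field on a function: `X(g)`. -/
def actT {n : ℕ} (X : TB n → TB n) (g : TB n → ℝ) : TB n → ℝ :=
  fun p => fderiv ℝ g p (X p)

/-- Exterior derivative of a `1`-form given as a functional on vector fields:
`dω(X,Y) = X(ω(Y)) − Y(ω(X)) − ω([X,Y])`. -/
def dOne {n : ℕ} (ω : (TB n → TB n) → (TB n → ℝ)) (X Y : TB n → TB n) : TB n → ℝ :=
  actT X (ω Y) - actT Y (ω X) - ω (lie X Y)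

/-- `d_J θ = i_J dθ − d i_J θ` evaluated on two vector fields. -/
def dJOne {n : ℕ} (θ : TB n → (TB n →L[ℝ] ℝ)) (X Y : TB n → TB n) : TB n → ℝ :=
  dOne (evalOne θ) (Jop X) Y + dOne (evalOne θ) X (Jop Y)
    - dOne (fun Z => evalOne θ (Jop Z)) X Y

/-- Let `S` be a spray, `k ≠ 0` an integer, and `θ` a semi-basic, positively
`(k−1)`-homogeneous (`L_C θ = (k−1)θ`), `d_J`-closed `1`-form on `TM \ {0}`.
Then `L = (1/k) i_S θ` is the unique positively `k`-homogeneous function with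
`d_J L = θ`. -/
theorem potential_of_homogeneous_dJ_closed_form (n : ℕ) (k : ℤ) (hk : k ≠ 0)
    (G : TB n → (Fin n → ℝ)) (hG : ContDiffOn ℝ (⊤ : ℕ∞) G (Slit n))
    (hspray : ∀ p ∈ Slit n, lie LiouvilleVF (semispray G) p = semispray G p)
    (θ : TB n → (TB n →L[ℝ] ℝ)) (hθ : ContDiffOn ℝ (⊤ : ℕ∞) θ (Slit n))
    (hsb : ∀ p ∈ Slit n, ∀ ξ : TB n, ξ.1 = 0 → θ p ξ = 0)
    (hhom : ∀ X : TB n → TB n, ContDiffOn ℝ (⊤ : ℕ∞) X (Slit n) → ∀ p ∈ Slit n,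
      fderiv ℝ (evalOne θ X) p (LiouvilleVF p) - θ p (lie LiouvilleVF X p)
        = ((k : ℝ) - 1) * θ p (X p))
    (hdJ : ∀ X Y : TB n → TB n, ContDiffOn ℝ (⊤ : ℕ∞) X (Slit n) → ContDiffOn ℝ (⊤ : ℕ∞) Y (Slit n) →
      ∀ p ∈ Slit n, dJOne θ X Y p = 0) :
    (∀ l : ℝ, 0 < l → ∀ p ∈ Slit n,
      (1 / (k : ℝ)) * θ (p.1, l • p.2) (semispray G (p.1, l • p.2))
        = l ^ k * ((1 / (k : ℝ)) * θ p (semispray G p))) ∧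
    (∀ p ∈ Slit n, ∀ ξ : TB n,
      fderiv ℝ (fun q => (1 / (k : ℝ)) * θ q (semispray G q)) p
          ((0 : Fin n → ℝ), ξ.1) = θ p ξ) ∧
    (∀ L' : TB n → ℝ, ContDiffOn ℝ (⊤ : ℕ∞) L' (Slit n) →
      (∀ l : ℝ, 0 < l → ∀ p ∈ Slit n, L' (p.1, l • p.2) = l ^ k * L' p) →
      (∀ p ∈ Slit n, ∀ ξ : TB n, fderiv ℝ L' p ((0 : Fin n → ℝ), ξ.1) = θ p ξ) →
      ∀ p ∈ Slit n, L' p = (1 / (k : ℝ)) * θ p (semispray G p)) := by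

  have hk' : (k : ℝ) ≠ 0 := Int.cast_ne_zero.mpr hk
  have hopen : IsOpen (Slit n) :=
    IsOpen.preimage continuous_snd isOpen_compl_singleton
  have hθd : ∀ p ∈ Slit n, DifferentiableAt ℝ θ p := fun p hp =>
    (hθ.contDiffAt (hopen.mem_nhds hp)).differentiableAt (by simp)
  have hGd : ∀ p ∈ Slit n, DifferentiableAt ℝ G p := fun p hp =>
    (hG.contDiffAt (hopen.mem_nhds hp)).differentiableAt (by simp)
  -- semi-basic: θ p (a,b) depends only on a
  have hsb2 : ∀ p ∈ Slit n, ∀ ξ η : TB n, ξ.1 = η.1 → θ p ξ = θ p η := by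
    intro p hp ξ η h
    have h0 := hsb p hp (ξ - η) (by simp [h])
    rw [map_sub] at h0
    linarith
  -- the semispray written without `2 •`
  have hSeq : semispray G = fun q : TB n => (q.2, -(G q + G q)) := by
    funext q
    simp [semispray, two_smul]
  have hSder : ∀ p ∈ Slit n, HasFDerivAt (semispray G)
      ((ContinuousLinearMap.snd ℝ (Fin n → ℝ) (Fin n → ℝ)).prod
        (-(fderiv ℝ G p + fderiv ℝ G p))) p := by
    intro p hp
    rw [hSeq]
    exact HasFDerivAt.prodMk hasFDerivAt_snd (((hGd p hp).hasFDerivAt.add (hGd p hp).hasFDerivAt).neg)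
  have hSsm : ContDiffOn ℝ (⊤ : ℕ∞) (semispray G) (Slit n) := by
    rw [hSeq]
    exact contDiff_snd.contDiffOn.prodMk ((hG.add hG).neg)
  -- derivative of q ↦ θ q ζ for a constant ζ
  have hconst : ∀ p ∈ Slit n, ∀ ζ v : TB n,
      fderiv ℝ (fun q => θ q ζ) p v = fderiv ℝ θ p v ζ := by
    intro p hp ζ v
    have h : HasFDerivAt (fun q => θ q ζ)
        ((θ p).comp (0 : TB n →L[ℝ] TB n) + (fderiv ℝ θ p).flip ζ) p :=
      (hθd p hp).hasFDerivAt.clm_apply (hasFDerivAt_const ζ p)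
    rw [h.fderiv]
    simp
  -- Euler identity for θ
  have hEθ : ∀ p ∈ Slit n, ∀ ζ : TB n,
      fderiv ℝ θ p ((0 : Fin n → ℝ), p.2) ζ = ((k : ℝ) - 1) * θ p ζ := by
    intro p hp ζ
    have h := hhom (fun _ => ζ) contDiffOn_const p hp
    have hC : HasFDerivAt (LiouvilleVF (n := n))
        ((0 : TB n →L[ℝ] (Fin n → ℝ)).prod
          (ContinuousLinearMap.snd ℝ (Fin n → ℝ) (Fin n → ℝ))) p :=
      HasFDerivAt.prodMk (hasFDerivAt_const (0 : Fin n → ℝ) p) hasFDerivAt_snd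
    have hlie : lie LiouvilleVF (fun _ => ζ) p = -(((0 : Fin n → ℝ), ζ.2) : TB n) := by
      simp [lie, hC.fderiv, Prod.ext_iff]
    rw [hlie, map_neg, hsb p hp (((0 : Fin n → ℝ), ζ.2) : TB n) rfl] at h
    have he : evalOne θ (fun _ => ζ) = fun q => θ q ζ := rfl
    rw [he, hconst p hp ζ (LiouvilleVF p)] at h
    simpa [LiouvilleVF] using h
  -- symmetry coming from dJ-closedness
  have hsym : ∀ p ∈ Slit n, ∀ ξ η : TB n,
      fderiv ℝ θ p ((0 : Fin n → ℝ), ξ.1) η = fderiv ℝ θ p ((0 : Fin n → ℝ), η.1) ξ := by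
    intro p hp ξ η
    have h := hdJ (fun _ => ξ) (fun _ => η) contDiffOn_const contDiffOn_const p hp
    have hz : ∀ w : Fin n → ℝ, θ p (((0 : Fin n → ℝ), w) : TB n) = 0 := fun w =>
      hsb p hp _ rfl
    have e1 : ∀ X : TB n → TB n, evalOne θ X = fun p => θ p (X p) := fun _ => rfl
    have e2 : ∀ X : TB n → TB n, Jop X = fun p => (((0 : Fin n → ℝ), (X p).1) : TB n) :=
      fun _ => rfl
    have e3 : ∀ X Y : TB n → TB n,
        lie X Y = fun p => fderiv ℝ Y p (X p) - fderiv ℝ X p (Y p) := fun _ _ => rfl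
    simp only [dJOne, dOne, actT, Pi.add_apply, Pi.sub_apply, e1, e2, e3,
      fderiv_const, fderiv_fun_const, Pi.zero_apply, ContinuousLinearMap.zero_apply, sub_zero,
      zero_sub, map_neg, map_zero, neg_zero, sub_self, hz, hconst p hp] at h
    linarith
  -- the key computation: d_J (i_S θ) = k θ
  have hkey : ∀ p ∈ Slit n, ∀ ξ : TB n,
      fderiv ℝ (fun q => θ q (semispray G q)) p ((0 : Fin n → ℝ), ξ.1)
        = (k : ℝ) * θ p ξ := by
    intro p hp ξ
    have hf : HasFDerivAt (fun q => θ q (semispray G q))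
        ((θ p).comp ((ContinuousLinearMap.snd ℝ (Fin n → ℝ) (Fin n → ℝ)).prod
            (-(fderiv ℝ G p + fderiv ℝ G p)))
          + (fderiv ℝ θ p).flip (semispray G p)) p :=
      (hθd p hp).hasFDerivAt.clm_apply (hSder p hp)
    rw [hf.fderiv]
    have e1 : θ p (((ContinuousLinearMap.snd ℝ (Fin n → ℝ) (Fin n → ℝ)).prod
        (-(fderiv ℝ G p + fderiv ℝ G p))) (((0 : Fin n → ℝ), ξ.1) : TB n)) = θ p ξ := by
      apply hsb2 p hp
      rfl
    have e2 : fderiv ℝ θ p ((0 : Fin n → ℝ), ξ.1) (semispray G p)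
        = ((k : ℝ) - 1) * θ p ξ := by
      rw [hsym p hp ξ (semispray G p)]
      have h1 : (semispray G p).1 = p.2 := rfl
      rw [h1]
      exact hEθ p hp ξ
    simp only [ContinuousLinearMap.add_apply, ContinuousLinearMap.comp_apply,
      ContinuousLinearMap.flip_apply, e1, e2]
    ring
  -- Euler identity for f = i_S θ
  have hEf : ∀ p ∈ Slit n,
      fderiv ℝ (fun q => θ q (semispray G q)) p ((0 : Fin n → ℝ), p.2)
        = (k : ℝ) * θ p (semispray G p) := fun p hp => hkey p hp (semispray G p)
  -- Part 2 : d_J L = θ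
  have part2 : ∀ p ∈ Slit n, ∀ ξ : TB n,
      fderiv ℝ (fun q => (1 / (k : ℝ)) * θ q (semispray G q)) p
        ((0 : Fin n → ℝ), ξ.1) = θ p ξ := by
    intro p hp ξ
    have hd : DifferentiableAt ℝ (fun q => θ q (semispray G q)) p :=
      ((hθd p hp).hasFDerivAt.clm_apply (hSder p hp)).differentiableAt
    rw [fderiv_const_mul hd (1 / (k : ℝ))]
    simp only [ContinuousLinearMap.smul_apply, smul_eq_mul]
    rw [hkey p hp ξ]
    field_simp
  -- Part 1 : homogeneity
  have part1 : ∀ l : ℝ, 0 < l → ∀ p ∈ Slit n,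
      θ (p.1, l • p.2) (semispray G (p.1, l • p.2))
        = l ^ k * θ p (semispray G p) := by
    intro l hl p hp
    have hmem : ∀ t : ℝ, 0 < t → ((p.1, t • p.2) : TB n) ∈ Slit n := by
      intro t ht
      exact smul_ne_zero ht.ne' hp
    have hc : ∀ t : ℝ, HasDerivAt (fun t : ℝ => ((p.1, t • p.2) : TB n))
        (((0 : Fin n → ℝ), p.2) : TB n) t := by
      intro t
      have h1 : HasDerivAt (fun t : ℝ => t • p.2) p.2 t := by
        simpa using (hasDerivAt_id t).smul_const p.2
      exact HasDerivAt.prodMk (hasDerivAt_const t p.1) h1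
    have hφ : ∀ t ∈ Set.Ioi (0 : ℝ),
        HasDerivAt (fun t : ℝ => θ (p.1, t • p.2) (semispray G (p.1, t • p.2)))
          (t⁻¹ * ((k : ℝ) * θ (p.1, t • p.2) (semispray G (p.1, t • p.2)))) t := by
      intro t ht
      have ht0 : (0 : ℝ) < t := ht
      have hq := hmem t ht0
      have hdf : DifferentiableAt ℝ (fun q => θ q (semispray G q)) (p.1, t • p.2) :=
        ((hθd _ hq).hasFDerivAt.clm_apply (hSder _ hq)).differentiableAt
      have hcomp : HasDerivAt (fun t : ℝ => θ (p.1, t • p.2) (semispray G (p.1, t • p.2)))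
          (fderiv ℝ (fun q => θ q (semispray G q)) (p.1, t • p.2)
            (((0 : Fin n → ℝ), p.2) : TB n)) t :=
        by have := hdf.hasFDerivAt.comp_hasDerivAt t (hc t); exact this
      have h1 : (((0 : Fin n → ℝ), p.2) : TB n) = t⁻¹ • (((0 : Fin n → ℝ), t • p.2) : TB n) := by
        rw [Prod.smul_mk, smul_smul, inv_mul_cancel₀ ht0.ne', one_smul, smul_zero]
      have hval : fderiv ℝ (fun q => θ q (semispray G q)) (p.1, t • p.2)
          (((0 : Fin n → ℝ), p.2) : TB n)
          = t⁻¹ * ((k : ℝ) * θ (p.1, t • p.2) (semispray G (p.1, t • p.2))) := by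
        rw [h1, map_smul]
        have h2 := hEf (p.1, t • p.2) hq
        rw [h2]
        simp [smul_eq_mul]
      rw [← hval]
      exact hcomp
    have hχ : ∀ t ∈ Set.Ioi (0 : ℝ),
        HasDerivAt (fun t : ℝ =>
          t ^ (-k) * θ (p.1, t • p.2) (semispray G (p.1, t • p.2))) 0 t := by
      intro t ht
      have ht0 : (0 : ℝ) < t := ht
      have h1 : HasDerivAt (fun t : ℝ => t ^ (-k)) (((-k : ℤ) : ℝ) * t ^ (-k - 1)) t :=
        hasDerivAt_zpow (-k) t (Or.inl ht0.ne')
      have h2 := h1.mul (hφ t ht)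
      have ht' : t ^ (-k) * t⁻¹ = t ^ (-k - 1) := (zpow_sub_one₀ ht0.ne' (-k)).symm
      have h3 : ((-k : ℤ) : ℝ) * t ^ (-k - 1)
            * (θ (p.1, t • p.2) (semispray G (p.1, t • p.2)))
          + t ^ (-k) * (t⁻¹ * ((k : ℝ) * θ (p.1, t • p.2) (semispray G (p.1, t • p.2))))
          = 0 := by
        have : t ^ (-k) * (t⁻¹ * ((k : ℝ) * θ (p.1, t • p.2) (semispray G (p.1, t • p.2))))
            = ((k : ℝ) * θ (p.1, t • p.2) (semispray G (p.1, t • p.2))) * (t ^ (-k) * t⁻¹) := by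
          ring
        rw [this, ht']
        push_cast
        ring
      rw [← h3]
      exact h2
    have hdiff : DifferentiableOn ℝ
        (fun t : ℝ => t ^ (-k) * θ (p.1, t • p.2) (semispray G (p.1, t • p.2)))
        (Set.Ioi 0) :=
      fun t ht => (hχ t ht).differentiableAt.differentiableWithinAt
    have hzero : ∀ t ∈ Set.Ioi (0 : ℝ), fderivWithin ℝ
        (fun t : ℝ => t ^ (-k) * θ (p.1, t • p.2) (semispray G (p.1, t • p.2)))
        (Set.Ioi 0) t = 0 := by
      intro t ht
      rw [fderivWithin_of_isOpen isOpen_Ioi ht, (hχ t ht).hasFDerivAt.fderiv]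
      ext s
      simp
    have hconst1 := (convex_Ioi (0 : ℝ)).is_const_of_fderivWithin_eq_zero hdiff hzero
      (Set.mem_Ioi.mpr hl) (Set.mem_Ioi.mpr one_pos)
    -- hconst1 : χ l = χ 1
    have h1s : ((p.1, (1 : ℝ) • p.2) : TB n) = p := by simp
    rw [h1s] at hconst1
    simp only [one_zpow, one_mul] at hconst1
    have hlk : l ^ k * l ^ (-k) = 1 := by
      rw [← zpow_add₀ hl.ne']
      simp
    have h6 := congrArg (fun x : ℝ => l ^ k * x) hconst1
    simp only [← mul_assoc] at h6
    rwa [hlk, one_mul] at h6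
  refine ⟨?_, part2, ?_⟩
  · intro l hl p hp
    rw [part1 l hl p hp]
    ring
  · intro L' hL' hhomL' hdJL' p hp
    have hL'd : DifferentiableAt ℝ L' p :=
      (hL'.contDiffAt (hopen.mem_nhds hp)).differentiableAt (by simp)
    have h1s : ((p.1, (1 : ℝ) • p.2) : TB n) = p := by simp
    have hc : HasDerivAt (fun t : ℝ => ((p.1, t • p.2) : TB n))
        (((0 : Fin n → ℝ), p.2) : TB n) 1 := by
      have h1 : HasDerivAt (fun t : ℝ => t • p.2) p.2 1 := by
        simpa using (hasDerivAt_id (1 : ℝ)).smul_const p.2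
      exact HasDerivAt.prodMk (hasDerivAt_const (1 : ℝ) p.1) h1
    have hF : HasFDerivAt L' (fderiv ℝ L' p) ((p.1, (1 : ℝ) • p.2) : TB n) := by
      rw [h1s]
      exact hL'd.hasFDerivAt
    have hder1 : HasDerivAt (fun t : ℝ => L' (p.1, t • p.2))
        (fderiv ℝ L' p (((0 : Fin n → ℝ), p.2) : TB n)) 1 :=
      by have := hF.comp_hasDerivAt 1 hc; exact this
    have hder2 : HasDerivAt (fun t : ℝ => L' (p.1, t • p.2)) ((k : ℝ) * L' p) 1 := by
      have hg : HasDerivAt (fun t : ℝ => t ^ k * L' p)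
          (((k : ℤ) : ℝ) * (1 : ℝ) ^ (k - 1) * L' p) 1 :=
        (hasDerivAt_zpow k 1 (Or.inl one_ne_zero)).mul_const (L' p)
      have heq : (fun t : ℝ => L' (p.1, t • p.2)) =ᶠ[nhds 1] fun t : ℝ => t ^ k * L' p :=
        Filter.eventuallyEq_of_mem (Ioi_mem_nhds one_pos)
          (fun t ht => hhomL' t ht p hp)
      simpa [one_zpow] using hg.congr_of_eventuallyEq heq
    have h3 := hder1.unique hder2
    have h4 : fderiv ℝ L' p (((0 : Fin n → ℝ), p.2) : TB n) = θ p (semispray G p) :=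
      hdJL' p hp (semispray G p)
    rw [h4] at h3
    field_simp
    linarith


end
end

section
/- Let S be a semispray on M and θ a semi-basic 1-form on TM \ {0}. If the 1-form L_S θ is closed, then locally L_S θ = dL for a smooth function L, and moreover d_J L = θ; that is, θ is the Poincaré–Cartan form of a local Lagrangian for which S is an Euler-Lagrange vector field (L_S d_J L = dL). -/
/- We work in induced coordinates on the tangent bundle `TM` of an `n`-dimensional
manifold: points of `TM` are pairs `p = (x, y) ∈ ℝⁿ × ℝⁿ`, the slit tangent bundle
`TM \ {0}` is `{p | p.2 ≠ 0}`, vector fields are maps `X : ℝⁿ × ℝⁿ → ℝⁿ × ℝⁿ`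
(components in the frame `∂/∂xⁱ, ∂/∂yⁱ`), and the canonical tangent structure acts
pointwise by `J(a,b) = (0,a)`. -/

noncomputable section

/-- The Lie derivative of a `1`-form along a vector field, as a functional:
`(L_S θ)(X) = S(θ(X)) − θ([S,X])`. -/
def LStheta {n : ℕ} (S : TB n → TB n) (θ : TB n → (TB n →L[ℝ] ℝ))
    (X : TB n → TB n) : TB n → ℝ :=
  actT S (evalOne θ X) - evalOne θ (lie S X)

open Metric Set MeasureTheory
open scoped NNReal ENNReal

section Auxiliary

variable {E : Type*} [NormedAddCommGroup E] [NormedSpace ℝ E]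

/-- Poincaré lemma for 1-forms on a ball: the radial primitive of a smooth 1-form with
symmetric derivative is a genuine primitive. -/
lemma poincare_ball [FiniteDimensional ℝ E] {U : Set E} (hU : IsOpen U) (ω : E → (E →L[ℝ] ℝ))
    (hω : ContDiffOn ℝ (⊤ : ℕ∞) ω U)
    (hsymm : ∀ p ∈ U, ∀ u v : E, fderiv ℝ ω p u v = fderiv ℝ ω p v u)
    {p₀ : E} {r : ℝ} (hball : ball p₀ r ⊆ U) :
    ∀ p ∈ ball p₀ r,
      HasFDerivAt (fun x => ∫ t in (0:ℝ)..1, ω (p₀ + t • (x - p₀)) (x - p₀)) (ω p) p := by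
  classical
  set c : ℝ → E → E := fun t x => p₀ + t • (x - p₀) with hc
  intro p hp
  -- basic facts
  have hωdiff : ∀ q ∈ U, DifferentiableAt ℝ ω q := fun q hq =>
    (hω.contDiffAt (hU.mem_nhds hq)).differentiableAt (by simp)
  have hωcont : ContinuousOn ω U := hω.continuousOn
  have hDωcont : ContinuousOn (fderiv ℝ ω) U :=
    (hω.fderiv_of_isOpen hU (m := (⊤ : ℕ∞)) (by simp)).continuousOn
  -- geometry
  have hpr : dist p p₀ < r := mem_ball.1 hp
  have hr0 : 0 < r := lt_of_le_of_lt dist_nonneg hpr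
  set ρ : ℝ := (r + dist p p₀) / 2 with hρ
  set ε : ℝ := (r - dist p p₀) / 2 with hε
  have hε_pos : 0 < ε := by rw [hε]; linarith
  have hρ0 : 0 ≤ ρ := by rw [hρ]; positivity
  have hρr : ρ < r := by rw [hρ]; linarith
  have hKU : closedBall p₀ ρ ⊆ U := fun z hz => hball (lt_of_le_of_lt (mem_closedBall.1 hz) hρr)
  have hmem : ∀ x ∈ ball p ε, ∀ t ∈ Set.Icc (0:ℝ) 1, c t x ∈ closedBall p₀ ρ := by
    intro x hx t ht
    have hxρ : dist x p₀ ≤ ρ := by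
      have h3 := dist_triangle x p p₀
      have hxp : dist x p < ε := mem_ball.1 hx
      rw [hρ]; rw [hε] at hxp; linarith
    simp only [mem_closedBall, hc, dist_eq_norm]
    have h4 : p₀ + t • (x - p₀) - p₀ = t • (x - p₀) := by abel
    rw [h4, norm_smul]
    calc |t| * ‖x - p₀‖ ≤ 1 * ‖x - p₀‖ := by
          apply mul_le_mul_of_nonneg_right _ (norm_nonneg _)
          rw [abs_le]; constructor <;> [linarith [ht.1]; linarith [ht.2]]
      _ = dist x p₀ := by rw [one_mul, dist_eq_norm]
      _ ≤ ρ := hxρ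
  have hxp₀ρ : ∀ x ∈ ball p ε, ‖x - p₀‖ ≤ ρ := by
    intro x hx
    have := hmem x hx 1 ⟨by norm_num, le_refl _⟩
    rw [← dist_eq_norm]
    simpa [hc] using this
  have hpmem : p ∈ ball p ε := mem_ball_self hε_pos
  -- bounds on compact set
  obtain ⟨M₁, hM₁⟩ := (isCompact_closedBall p₀ ρ).exists_bound_of_continuousOn
    (hωcont.mono hKU)
  obtain ⟨M₂, hM₂⟩ := (isCompact_closedBall p₀ ρ).exists_bound_of_continuousOn
    (f := fderiv ℝ ω) (hDωcont.mono hKU)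
  have hM₁0 : 0 ≤ M₁ := le_trans (norm_nonneg _) (hM₁ p₀ (mem_closedBall_self hρ0))
  have hM₂0 : 0 ≤ M₂ := le_trans (norm_nonneg _) (hM₂ p₀ (mem_closedBall_self hρ0))
  -- the parametric family and its derivative
  set F : E → ℝ → ℝ := fun x t => ω (c t x) (x - p₀) with hF
  set F' : E → ℝ → (E →L[ℝ] ℝ) := fun x t =>
    t • ((fderiv ℝ ω (c t x)).flip (x - p₀)) + ω (c t x) with hF'
  have hIcc : Set.uIoc (0:ℝ) 1 ⊆ Set.Icc (0:ℝ) 1 := by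
    rw [Set.uIoc_of_le (by norm_num : (0:ℝ) ≤ 1)]
    exact Set.Ioc_subset_Icc_self
  have hccont : ∀ x : E, Continuous (fun t => c t x) := by
    intro x; exact continuous_const.add (continuous_id.smul continuous_const)
  -- differentiability of the family in x
  have hdiff : ∀ t ∈ Set.Icc (0:ℝ) 1, ∀ x ∈ ball p ε, HasFDerivAt (fun x => F x t) (F' x t) x := by
    intro t ht x hx
    have hcx : c t x ∈ U := hKU (hmem x hx t ht)
    have h1 : HasFDerivAt (fun x => c t x) (t • (ContinuousLinearMap.id ℝ E)) x := by
      have h0 : HasFDerivAt (fun x : E => x - p₀) (ContinuousLinearMap.id ℝ E) x :=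
        (hasFDerivAt_id x).sub_const p₀
      simpa [hc] using ((h0.const_smul t).const_add p₀)
    have h2 : HasFDerivAt (fun x => ω (c t x)) ((fderiv ℝ ω (c t x)).comp
        (t • (ContinuousLinearMap.id ℝ E))) x :=
      ((hωdiff _ hcx).hasFDerivAt.comp x h1)
    have h3 : HasFDerivAt (fun x : E => x - p₀) (ContinuousLinearMap.id ℝ E) x :=
      (hasFDerivAt_id x).sub_const p₀
    have h4 := h2.clm_apply h3
    refine h4.congr_fderiv ?_
    ext v
    simp [hF', ContinuousLinearMap.flip_apply, ContinuousLinearMap.smul_apply,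
      ContinuousLinearMap.comp_apply, _root_.map_smul]
    ring
  -- bound on the derivative
  have hbound : ∀ t ∈ Set.Icc (0:ℝ) 1, ∀ x ∈ ball p ε, ‖F' x t‖ ≤ M₂ * ρ + M₁ := by
    intro t ht x hx
    have hcx := hmem x hx t ht
    have habs : |t| ≤ 1 := by rw [abs_le]; exact ⟨by linarith [ht.1], ht.2⟩
    calc ‖F' x t‖ ≤ ‖t • ((fderiv ℝ ω (c t x)).flip (x - p₀))‖ + ‖ω (c t x)‖ := norm_add_le _ _
      _ ≤ |t| * (‖(fderiv ℝ ω (c t x)).flip‖ * ‖x - p₀‖) + M₁ := by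
          rw [norm_smul, Real.norm_eq_abs]
          gcongr
          · exact ContinuousLinearMap.le_opNorm _ _
          · exact hM₁ _ hcx
      _ ≤ 1 * (M₂ * ρ) + M₁ := by
          apply add_le_add ?_ le_rfl
          apply mul_le_mul habs _ (by positivity) (by norm_num)
          apply mul_le_mul _ (hxp₀ρ x hx) (norm_nonneg _) hM₂0
          rw [ContinuousLinearMap.opNorm_flip]
          exact hM₂ _ hcx
      _ = M₂ * ρ + M₁ := by ring
  -- measurability / integrability in t
  have hcontt : ∀ x ∈ ball p ε, ContinuousOn (fun t => F x t) (Set.Icc (0:ℝ) 1) := by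
    intro x hx
    apply ContinuousOn.clm_apply _ continuousOn_const
    exact (hωcont.comp (hccont x).continuousOn (fun t ht => hKU (hmem x hx t ht)))
  have hDc : ∀ x ∈ ball p ε, ContinuousOn (fun t => fderiv ℝ ω (c t x)) (Set.Icc (0:ℝ) 1) :=
    fun x hx => hDωcont.comp (hccont x).continuousOn (fun t ht => hKU (hmem x hx t ht))
  have hflipcont : ContinuousOn (fun t => (fderiv ℝ ω (c t p)).flip) (Set.Icc (0:ℝ) 1) := by
    have := (ContinuousLinearMap.flipₗᵢ ℝ E E ℝ).continuous.comp_continuousOn (hDc p hpmem)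
    simp only [Function.comp_def, ContinuousLinearMap.coe_flipₗᵢ] at this
    exact this
  have hcontt' : ContinuousOn (fun t => F' p t) (Set.Icc (0:ℝ) 1) := by
    apply ContinuousOn.add
    · exact ContinuousOn.smul continuousOn_id (hflipcont.clm_apply continuousOn_const)
    · exact hωcont.comp (hccont p).continuousOn (fun t ht => hKU (hmem p hpmem t ht))
  have huIcc : Set.uIcc (0:ℝ) 1 = Set.Icc (0:ℝ) 1 := Set.uIcc_of_le (by norm_num)
  -- fundamental theorem of calculus: the integral of F' p is ω p
  have key : ∀ t ∈ Set.uIcc (0:ℝ) 1, HasDerivAt (fun t => t • ω (c t p)) (F' p t) t := by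
    intro t ht
    rw [huIcc] at ht
    have hcp : c t p ∈ U := hKU (hmem p hpmem t ht)
    have h1 : HasDerivAt (fun t => c t p) (p - p₀) t := by
      simpa [hc] using (((hasDerivAt_id t).smul_const (p - p₀)).const_add p₀)
    have h2 : HasDerivAt (fun t => ω (c t p)) (fderiv ℝ ω (c t p) (p - p₀)) t :=
      (hωdiff _ hcp).hasFDerivAt.comp_hasDerivAt t h1
    have h3 := (hasDerivAt_id t).smul h2
    refine h3.congr_deriv ?_
    ext v
    simp only [hF', ContinuousLinearMap.add_apply, ContinuousLinearMap.smul_apply,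
      ContinuousLinearMap.flip_apply, one_smul, smul_eq_mul, id_eq]
    rw [hsymm _ hcp v (p - p₀)]
  have hinteg : IntervalIntegrable (fun t => F' p t) MeasureTheory.volume 0 1 := by
    apply ContinuousOn.intervalIntegrable
    rw [huIcc]; exact hcontt'
  have hFTC : (∫ t in (0:ℝ)..1, F' p t) = ω p := by
    rw [intervalIntegral.integral_eq_sub_of_hasDerivAt key hinteg]
    simp [hc]
  -- differentiation under the integral sign
  have main := intervalIntegral.hasFDerivAt_integral_of_dominated_of_fderiv_le
    (μ := MeasureTheory.volume) (F := F) (F' := F') (x₀ := p) (a := 0) (b := 1)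
    (bound := fun _ => M₂ * ρ + M₁) (ball_mem_nhds p hε_pos)
    (Filter.eventually_of_mem (ball_mem_nhds p hε_pos) (fun x hx =>
      (((hcontt x hx).mono hIcc)).aestronglyMeasurable measurableSet_uIoc))
    (by apply ContinuousOn.intervalIntegrable; rw [huIcc]; exact hcontt p hpmem)
    ((hcontt'.mono hIcc).aestronglyMeasurable measurableSet_uIoc)
    (Filter.Eventually.of_forall (fun t ht x hx => hbound t (hIcc ht) x hx))
    intervalIntegrable_const
    (Filter.Eventually.of_forall (fun t ht x hx => hdiff t (hIcc ht) x hx))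
  rw [hFTC] at main
  exact main

end Auxiliary

/-- Let `S` be a semispray and `θ` a semi-basic `1`-form on `TM \ {0}` such that the
`1`-form `L_S θ` is closed.  Then locally `L_S θ = dL` for a smooth function `L`
with `d_J L = θ`: `θ` is the Poincaré–Cartan form of a local Lagrangian for which
`S` is an Euler–Lagrange vector field (`L_S d_J L = dL`). -/
theorem closed_LStheta_gives_local_lagrangian (n : ℕ)
    (G : TB n → (Fin n → ℝ)) (hG : ContDiffOn ℝ (⊤ : ℕ∞) G (Slit n))
    (θ : TB n → (TB n →L[ℝ] ℝ)) (hθ : ContDiffOn ℝ (⊤ : ℕ∞) θ (Slit n))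
    (hsb : ∀ p ∈ Slit n, ∀ ξ : TB n, ξ.1 = 0 → θ p ξ = 0)
    (hclosed : ∀ X Y : TB n → TB n,
      ContDiffOn ℝ (⊤ : ℕ∞) X (Slit n) → ContDiffOn ℝ (⊤ : ℕ∞) Y (Slit n) →
      ∀ p ∈ Slit n, dOne (LStheta (semispray G) θ) X Y p = 0) :
    ∀ p₀ ∈ Slit n, ∃ U : Set (TB n), IsOpen U ∧ p₀ ∈ U ∧ U ⊆ Slit n ∧
      ∃ L : TB n → ℝ, ContDiffOn ℝ (⊤ : ℕ∞) L U ∧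
        (∀ X : TB n → TB n, ContDiffOn ℝ (⊤ : ℕ∞) X (Slit n) →
          ∀ p ∈ U, fderiv ℝ L p (X p) = LStheta (semispray G) θ X p) ∧
        (∀ p ∈ U, ∀ ξ : TB n, fderiv ℝ L p ((0 : Fin n → ℝ), ξ.1) = θ p ξ) := by
  classical
  have hSlit : IsOpen (Slit n) := by
    have : Slit n = Prod.snd ⁻¹' ({(0 : Fin n → ℝ)}ᶜ) := rfl
    rw [this]
    exact isOpen_compl_singleton.preimage continuous_snd
  -- differentiability helpers
  have hdGat : ∀ p ∈ Slit n, DifferentiableAt ℝ G p := fun p hp =>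
    (hG.contDiffAt (hSlit.mem_nhds hp)).differentiableAt (by simp)
  have hdθat : ∀ p ∈ Slit n, DifferentiableAt ℝ θ p := fun p hp =>
    (hθ.contDiffAt (hSlit.mem_nhds hp)).differentiableAt (by simp)
  -- smoothness of the semispray
  have hS : ContDiffOn ℝ (⊤ : ℕ∞) (semispray G) (Slit n) := by
    have : ContDiffOn ℝ (⊤ : ℕ∞) (fun p : TB n => (p.2, -(2 • G p))) (Slit n) :=
      ContDiffOn.prodMk (contDiff_snd.contDiffOn) ((hG.const_smul (2:ℕ)).neg)
    exact this
  -- the pointwise 1-form ω with (L_S θ)(X) = ω (X ·)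
  set ω : TB n → (TB n →L[ℝ] ℝ) := fun q =>
    fderiv ℝ θ q (semispray G q) + (θ q).comp (fderiv ℝ (semispray G) q) with hωdef
  have hωsmooth : ContDiffOn ℝ (⊤ : ℕ∞) ω (Slit n) := by
    apply ContDiffOn.add
    · exact ContDiffOn.clm_apply (hθ.fderiv_of_isOpen hSlit (m := (⊤ : ℕ∞)) (by simp)) hS
    · exact ContDiffOn.clm_comp hθ (hS.fderiv_of_isOpen hSlit (m := (⊤ : ℕ∞)) (by simp))
  have hdωat : ∀ p ∈ Slit n, DifferentiableAt ℝ ω p := fun p hp =>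
    (hωsmooth.contDiffAt (hSlit.mem_nhds hp)).differentiableAt (by simp)
  -- key identity : L_S θ is tensorial, given by ω
  have hkey : ∀ (X : TB n → TB n) (p : TB n), p ∈ Slit n → DifferentiableAt ℝ X p →
      LStheta (semispray G) θ X p = ω p (X p) := by
    intro X p hp hX
    have h1 : fderiv ℝ (evalOne θ X) p
        = (θ p).comp (fderiv ℝ X p) + (fderiv ℝ θ p).flip (X p) :=
      ((hdθat p hp).hasFDerivAt.clm_apply hX.hasFDerivAt).fderiv
    simp only [LStheta, Pi.sub_apply, actT, h1, evalOne, lie, hωdef, map_sub,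
      ContinuousLinearMap.add_apply, ContinuousLinearMap.comp_apply,
      ContinuousLinearMap.flip_apply]
    ring
  -- derivative of pointwise evaluations of ω
  have happ : ∀ p ∈ Slit n, ∀ w : TB n,
      fderiv ℝ (fun q => ω q w) p = (fderiv ℝ ω p).flip w := by
    intro p hp w
    have h1 := ((hdωat p hp).hasFDerivAt.clm_apply (hasFDerivAt_const w p)).fderiv
    simpa using h1
  -- symmetry of the derivative of ω from closedness
  have hsymm : ∀ p ∈ Slit n, ∀ u v : TB n, fderiv ℝ ω p u v = fderiv ℝ ω p v u := by
    intro p hp u v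
    have hcl := hclosed (fun _ => u) (fun _ => v) contDiffOn_const contDiffOn_const p hp
    have hlie0 : lie (fun _ : TB n => u) (fun _ => v) = fun _ => (0 : TB n) := by
      funext q; simp [lie]
    have hLS0 : LStheta (semispray G) θ (fun _ => (0 : TB n)) = fun _ => (0:ℝ) := by
      have e0 : evalOne θ (fun _ : TB n => (0 : TB n)) = fun _ => (0:ℝ) := by
        funext q'; simp [evalOne]
      funext q
      have e1 : lie (semispray G) (fun _ : TB n => (0 : TB n)) q = 0 := by
        simp [lie]
      simp [LStheta, actT, e0, evalOne, e1]
    have hEqv : (LStheta (semispray G) θ (fun _ => v)) =ᶠ[nhds p] (fun q => ω q v) := by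
      filter_upwards [hSlit.mem_nhds hp] with q hq
      exact hkey _ q hq (differentiableAt_const v)
    have hEqu : (LStheta (semispray G) θ (fun _ => u)) =ᶠ[nhds p] (fun q => ω q u) := by
      filter_upwards [hSlit.mem_nhds hp] with q hq
      exact hkey _ q hq (differentiableAt_const u)
    have h1 : fderiv ℝ (LStheta (semispray G) θ (fun _ => v)) p = (fderiv ℝ ω p).flip v := by
      rw [hEqv.fderiv_eq, happ p hp v]
    have h2 : fderiv ℝ (LStheta (semispray G) θ (fun _ => u)) p = (fderiv ℝ ω p).flip u := by
      rw [hEqu.fderiv_eq, happ p hp u]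
    simp only [dOne, Pi.sub_apply, actT, hlie0, hLS0, h1, h2] at hcl
    simp only [ContinuousLinearMap.flip_apply] at hcl
    linarith
  -- semi-basic forms do not see the second component
  have hsb2 : ∀ p ∈ Slit n, ∀ (a b b' : Fin n → ℝ), θ p (a, b) = θ p (a, b') := by
    intro p hp a b b'
    have h1 : θ p ((a, b) - (a, b')) = 0 := by
      apply hsb p hp
      simp
    rw [map_sub] at h1
    linarith
  -- evaluation of ω on vertical vectors gives back θ
  have hωJ : ∀ p ∈ Slit n, ∀ ξ : TB n, ω p ((0 : Fin n → ℝ), ξ.1) = θ p ξ := by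
    intro p hp ξ
    have hθd := hdθat p hp
    -- first summand vanishes
    have hzero : (fun q => θ q ((0 : Fin n → ℝ), ξ.1)) =ᶠ[nhds p] (fun _ => (0:ℝ)) := by
      filter_upwards [hSlit.mem_nhds hp] with q hq
      exact hsb q hq _ rfl
    have hflip0 : (fderiv ℝ θ p).flip ((0 : Fin n → ℝ), ξ.1) = 0 := by
      have e1 := (hθd.hasFDerivAt.clm_apply
        (hasFDerivAt_const (((0 : Fin n → ℝ), ξ.1) : TB n) p)).fderiv
      have e2 : fderiv ℝ (fun q => θ q (((0 : Fin n → ℝ), ξ.1) : TB n)) p = 0 := by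
        rw [hzero.fderiv_eq]
        exact fderiv_const_apply 0
      rw [e2] at e1
      simpa using e1.symm
    have hterm1 : fderiv ℝ θ p (semispray G p) ((0 : Fin n → ℝ), ξ.1) = 0 := by
      have := congrArg (fun (T : TB n →L[ℝ] ℝ) => T (semispray G p)) hflip0
      simpa [ContinuousLinearMap.flip_apply] using this
    -- second summand
    have hSd : HasFDerivAt (semispray G)
        ((ContinuousLinearMap.snd ℝ (Fin n → ℝ) (Fin n → ℝ)).prod
          (-(2 • fderiv ℝ G p))) p := by
      exact hasFDerivAt_snd.prodMk (((hdGat p hp).hasFDerivAt.const_smul (2:ℕ)).neg)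
    have hterm2 : fderiv ℝ (semispray G) p ((0 : Fin n → ℝ), ξ.1)
        = (ξ.1, -(2 • fderiv ℝ G p ((0 : Fin n → ℝ), ξ.1))) := by
      rw [hSd.fderiv]
      rfl
    simp only [hωdef, ContinuousLinearMap.add_apply, ContinuousLinearMap.comp_apply,
      hterm1, hterm2, zero_add]
    calc θ p (ξ.1, -(2 • fderiv ℝ G p ((0 : Fin n → ℝ), ξ.1))) = θ p (ξ.1, ξ.2) :=
          hsb2 p hp _ _ _
      _ = θ p ξ := by rw [Prod.mk.eta]
  -- Main construction
  intro p₀ hp₀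
  obtain ⟨r₁, hr₁pos, hr₁sub⟩ := Metric.isOpen_iff.1 hSlit p₀ hp₀
  obtain ⟨ρ₀, h0ρ₀⟩ : ∃ ρ₀ : ℝ≥0, (0:ℝ≥0∞) < ρ₀ := ⟨1, by simp⟩
  set ρ : ℝ≥0 := min ρ₀ (Real.toNNReal (r₁/2)) with hρdef
  have hρ₀pos : 0 < ρ₀ := by exact_mod_cast h0ρ₀
  have hρpos : 0 < ρ := lt_min hρ₀pos (Real.toNNReal_pos.2 (by linarith))
  have hρr₁ : (ρ : ℝ) < r₁ := by
    have h1 : (ρ : ℝ) ≤ r₁ / 2 := by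
      have := min_le_right ρ₀ (Real.toNNReal (r₁/2))
      calc (ρ : ℝ) ≤ (Real.toNNReal (r₁/2) : ℝ) := by exact_mod_cast this
        _ = r₁ / 2 := Real.coe_toNNReal _ (by linarith)
    linarith
  have hballSlit : Metric.ball p₀ (ρ:ℝ) ⊆ Slit n :=
    subset_trans (ball_subset_ball hρr₁.le) hr₁sub
  set L : TB n → ℝ := fun x => ∫ t in (0:ℝ)..1, ω (p₀ + t • (x - p₀)) (x - p₀) with hLdef
  have hLd : ∀ p ∈ Metric.ball p₀ (ρ:ℝ), HasFDerivAt L (ω p) p :=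
    poincare_ball hSlit ω hωsmooth hsymm hballSlit
  refine ⟨Metric.ball p₀ (ρ:ℝ), isOpen_ball, mem_ball_self (by exact_mod_cast hρpos),
    hballSlit, L, ?_, ?_, ?_⟩
  · -- smoothness (indeed analyticity) of L
    have hfd : ∀ q ∈ Metric.ball p₀ (ρ:ℝ), fderiv ℝ L q = ω q := fun q hq => (hLd q hq).fderiv
    rw [contDiffOn_infty_iff_fderiv_of_isOpen isOpen_ball]
    exact ⟨fun q hq => (hLd q hq).differentiableAt.differentiableWithinAt,
      (hωsmooth.mono hballSlit).congr hfd⟩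
  · intro X hX p hp
    have hpS := hballSlit hp
    rw [(hLd p hp).fderiv]
    exact (hkey X p hpS ((hX.contDiffAt (hSlit.mem_nhds hpS)).differentiableAt (by simp))).symm
  · intro p hp ξ
    rw [(hLd p hp).fderiv]
    exact hωJ p (hballSlit hp) ξ

end
end

section
/- Let S be a semispray and θ a semi-basic 1-form on TM \ {0} satisfying the Helmholtz conditions d_h θ = 0, d_J θ = 0, ∇(dθ) = 0, and d_Φ θ = 0 (where ∇ is the dynamical covariant derivative and Φ the Jacobi endomorphism). Then the 1-form L_S θ is closed. -/
/- We work in induced coordinates on the tangent bundle `TM` of an `n`-dimensional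
manifold: points of `TM` are pairs `p = (x, y) ∈ ℝⁿ × ℝⁿ`, the slit tangent bundle
`TM \ {0}` is `{p | p.2 ≠ 0}`, vector fields are maps `X : ℝⁿ × ℝⁿ → ℝⁿ × ℝⁿ`
(components in the frame `∂/∂xⁱ, ∂/∂yⁱ`), and the canonical tangent structure acts
pointwise by `J(a,b) = (0,a)`. -/

noncomputable section

/-- The Lie derivative `L_S h`, acting by `(L_S h)X = [S,hX] − h[S,X]`. -/
def LSh {n : ℕ} (S X : TB n → TB n) : TB n → TB n := lie S (hop S X) - hop S (lie S X)

/-- The Lie derivative `L_S v`, acting by `(L_S v)X = [S,vX] − v[S,X]`. -/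
def LSv {n : ℕ} (S X : TB n → TB n) : TB n → TB n := lie S (vop S X) - vop S (lie S X)

/-- The almost complex structure `F = h ∘ (L_S h) − J` of a semispray `S`. -/
def Fop {n : ℕ} (S X : TB n → TB n) : TB n → TB n := hop S (LSh S X) - Jop X

/-- The curvature `R = (1/2)[h,h]`, the Nijenhuis tensor of the horizontal projector:
`R(X,Y) = [hX,hY] + h(h[X,Y]) − h[X,hY] − h[hX,Y]`. -/
def Rop {n : ℕ} (S X Y : TB n → TB n) : TB n → TB n :=
  lie (hop S X) (hop S Y) + hop S (hop S (lie X Y))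
    - hop S (lie X (hop S Y)) - hop S (lie (hop S X) Y)

/-- The Jacobi endomorphism `Φ = v ∘ (L_S h)`. -/
def Phiop {n : ℕ} (S X : TB n → TB n) : TB n → TB n := vop S (LSh S X)

/-- The tensor `Ψ = h ∘ (L_S h) + v ∘ (L_S v)`. -/
def Psiop {n : ℕ} (S X : TB n → TB n) : TB n → TB n := hop S (LSh S X) + vop S (LSv S X)

/-- `d_A θ = i_A dθ − d i_A θ` for a (1,1)-tensor given as an operator `Aop`
on vector fields, evaluated on two vector fields. -/
def dAOneForm {n : ℕ} (Aop : (TB n → TB n) → (TB n → TB n))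
    (θ : TB n → (TB n →L[ℝ] ℝ)) (X Y : TB n → TB n) : TB n → ℝ :=
  dOne (evalOne θ) (Aop X) Y + dOne (evalOne θ) X (Aop Y)
    - dOne (fun Z => evalOne θ (Aop Z)) X Y

/-- The dynamical covariant derivative on vector fields: `∇X = h[S,hX] + v[S,vX]`. -/
def nabV {n : ℕ} (S X : TB n → TB n) : TB n → TB n :=
  hop S (lie S (hop S X)) + vop S (lie S (vop S X))

/-- The dynamical covariant derivative of the `2`-form `dθ`:
`(∇dθ)(X,Y) = S(dθ(X,Y)) − dθ(∇X,Y) − dθ(X,∇Y)`. -/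
def nablaDtheta {n : ℕ} (S : TB n → TB n) (θ : TB n → (TB n →L[ℝ] ℝ))
    (X Y : TB n → TB n) : TB n → ℝ :=
  actT S (dOne (evalOne θ) X Y) - dOne (evalOne θ) (nabV S X) Y
    - dOne (evalOne θ) X (nabV S Y)

open Filter Topology ContinuousLinearMap

namespace Helm

variable {n : ℕ}

lemma isOpen_slit : IsOpen (Slit n) :=
  isOpen_ne.preimage continuous_snd

lemma slit_mem_nhds {p : TB n} (hp : p ∈ Slit n) : Slit n ∈ 𝓝 p :=
  isOpen_slit.mem_nhds hp

section cong
variable {α : Type*} [NormedAddCommGroup α] [NormedSpace ℝ α]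

lemma fderiv_congr_slit {f g : TB n → α} (h : ∀ z ∈ Slit n, f z = g z)
    {p : TB n} (hp : p ∈ Slit n) : fderiv ℝ f p = fderiv ℝ g p :=
  Filter.EventuallyEq.fderiv_eq (Filter.eventually_of_mem (slit_mem_nhds hp) h)

lemma smOn_fderiv {f : TB n → α} (hf : ContDiffOn ℝ (⊤ : ℕ∞) f (Slit n)) :
    ContDiffOn ℝ (⊤ : ℕ∞) (fderiv ℝ f) (Slit n) :=
  hf.fderiv_of_isOpen isOpen_slit (by simp)

lemma da {f : TB n → α} (hf : ContDiffOn ℝ (⊤ : ℕ∞) f (Slit n)) {p : TB n} (hp : p ∈ Slit n) :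
    DifferentiableAt ℝ f p :=
  ((hf.contDiffAt (slit_mem_nhds hp)).of_le (by simp)).differentiableAt one_ne_zero

end cong

variable {G : TB n → (Fin n → ℝ)}

lemma smOn_S (hG : ContDiffOn ℝ (⊤ : ℕ∞) G (Slit n)) :
    ContDiffOn ℝ (⊤ : ℕ∞) (semispray G) (Slit n) := by
  have : semispray G = fun p : TB n => (p.2, (-2 : ℝ) • G p) := by
    funext p
    simp only [semispray, Prod.mk.injEq, true_and]
    have : (2:ℝ) • G p = 2 • G p := by
      rw [← Nat.cast_smul_eq_nsmul ℝ]; norm_num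
    rw [neg_smul, this]
  rw [this]
  exact (contDiff_snd.contDiffOn).prodMk (hG.const_smul (-2 : ℝ))

lemma smOn_J {X : TB n → TB n} (hX : ContDiffOn ℝ (⊤ : ℕ∞) X (Slit n)) :
    ContDiffOn ℝ (⊤ : ℕ∞) (Jop X) (Slit n) :=
  contDiffOn_const.prodMk hX.fst

lemma smOn_lie {X Y : TB n → TB n} (hX : ContDiffOn ℝ (⊤ : ℕ∞) X (Slit n))
    (hY : ContDiffOn ℝ (⊤ : ℕ∞) Y (Slit n)) : ContDiffOn ℝ (⊤ : ℕ∞) (lie X Y) (Slit n) :=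
  ((smOn_fderiv hY).clm_apply hX).sub ((smOn_fderiv hX).clm_apply hY)

lemma smOn_LSJ {S X : TB n → TB n} (hS : ContDiffOn ℝ (⊤ : ℕ∞) S (Slit n))
    (hX : ContDiffOn ℝ (⊤ : ℕ∞) X (Slit n)) : ContDiffOn ℝ (⊤ : ℕ∞) (LSJ S X) (Slit n) :=
  (smOn_lie hS (smOn_J hX)).sub (smOn_J (smOn_lie hS hX))

lemma smOn_hop {S X : TB n → TB n} (hS : ContDiffOn ℝ (⊤ : ℕ∞) S (Slit n))
    (hX : ContDiffOn ℝ (⊤ : ℕ∞) X (Slit n)) : ContDiffOn ℝ (⊤ : ℕ∞) (hop S X) (Slit n) := by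
  have : hop S X = fun p => (1/2 : ℝ) • (X p - LSJ S X p) := rfl
  rw [this]
  exact (hX.sub (smOn_LSJ hS hX)).const_smul _

lemma smOn_vop {S X : TB n → TB n} (hS : ContDiffOn ℝ (⊤ : ℕ∞) S (Slit n))
    (hX : ContDiffOn ℝ (⊤ : ℕ∞) X (Slit n)) : ContDiffOn ℝ (⊤ : ℕ∞) (vop S X) (Slit n) := by
  have : vop S X = fun p => (1/2 : ℝ) • (X p + LSJ S X p) := rfl
  rw [this]
  exact (hX.add (smOn_LSJ hS hX)).const_smul _

lemma smOn_LSh {S X : TB n → TB n} (hS : ContDiffOn ℝ (⊤ : ℕ∞) S (Slit n))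
    (hX : ContDiffOn ℝ (⊤ : ℕ∞) X (Slit n)) : ContDiffOn ℝ (⊤ : ℕ∞) (LSh S X) (Slit n) :=
  (smOn_lie hS (smOn_hop hS hX)).sub (smOn_hop hS (smOn_lie hS hX))

lemma smOn_Phi {S X : TB n → TB n} (hS : ContDiffOn ℝ (⊤ : ℕ∞) S (Slit n))
    (hX : ContDiffOn ℝ (⊤ : ℕ∞) X (Slit n)) : ContDiffOn ℝ (⊤ : ℕ∞) (Phiop S X) (Slit n) :=
  smOn_vop hS (smOn_LSh hS hX)

lemma smOn_nabV {S X : TB n → TB n} (hS : ContDiffOn ℝ (⊤ : ℕ∞) S (Slit n))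
    (hX : ContDiffOn ℝ (⊤ : ℕ∞) X (Slit n)) : ContDiffOn ℝ (⊤ : ℕ∞) (nabV S X) (Slit n) :=
  (smOn_hop hS (smOn_lie hS (smOn_hop hS hX))).add
    (smOn_vop hS (smOn_lie hS (smOn_vop hS hX)))

end Helm
namespace Helm

variable {n : ℕ} {G : TB n → (Fin n → ℝ)}

/-- The derivative of the semispray as a continuous linear map. -/
def SD (G : TB n → (Fin n → ℝ)) (p : TB n) : TB n →L[ℝ] TB n :=
  (ContinuousLinearMap.snd ℝ (Fin n → ℝ) (Fin n → ℝ)).prod ((-2 : ℝ) • fderiv ℝ G p)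

lemma sspray_eq : semispray G = fun p : TB n => (p.2, (-2 : ℝ) • G p) := by
  funext p
  simp only [semispray, Prod.mk.injEq, true_and]
  have : (2:ℝ) • G p = 2 • G p := by
    rw [← Nat.cast_smul_eq_nsmul ℝ]; norm_num
  rw [neg_smul, this]

lemma hasFDerivAt_S (hG : ContDiffOn ℝ (⊤ : ℕ∞) G (Slit n)) {p : TB n} (hp : p ∈ Slit n) :
    HasFDerivAt (semispray G) (SD G p) p := by
  rw [sspray_eq]
  exact HasFDerivAt.prodMk (hasFDerivAt_snd) ((da hG hp).hasFDerivAt.const_smul (-2 : ℝ))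

lemma fderiv_S_apply (hG : ContDiffOn ℝ (⊤ : ℕ∞) G (Slit n)) {p : TB n} (hp : p ∈ Slit n)
    (w : TB n) :
    fderiv ℝ (semispray G) p w = (w.2, (-2 : ℝ) • fderiv ℝ G p w) := by
  rw [(hasFDerivAt_S hG hp).fderiv]
  rfl

/-- The tangent structure as a continuous linear map. -/
def Jc (n : ℕ) : TB n →L[ℝ] TB n :=
  (0 : TB n →L[ℝ] (Fin n → ℝ)).prod (ContinuousLinearMap.fst ℝ (Fin n → ℝ) (Fin n → ℝ))

lemma Jop_eq_comp (W : TB n → TB n) : Jop W = fun z => Jc n (W z) := by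
  funext z; simp [Jop, Jc]

lemma hasFDerivAt_Jop {W : TB n → TB n} {q : TB n} (hW : DifferentiableAt ℝ W q) :
    HasFDerivAt (Jop W) ((Jc n).comp (fderiv ℝ W q)) q := by
  rw [Jop_eq_comp]
  exact (Jc n).hasFDerivAt.comp q hW.hasFDerivAt

lemma fderiv_Jop_apply {W : TB n → TB n} {q : TB n} (hW : DifferentiableAt ℝ W q)
    (w : TB n) : fderiv ℝ (Jop W) q w = (0, (fderiv ℝ W q w).1) := by
  rw [(hasFDerivAt_Jop hW).fderiv]
  rfl

lemma LSJ_eq (hG : ContDiffOn ℝ (⊤ : ℕ∞) G (Slit n)) {W : TB n → TB n} {q : TB n}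
    (hq : q ∈ Slit n) (hW : DifferentiableAt ℝ W q) :
    LSJ (semispray G) W q
      = (-(W q).1, (W q).2 + (2:ℝ) • fderiv ℝ G q ((0 : Fin n → ℝ), (W q).1)) := by
  have h1 : lie (semispray G) (Jop W) q
      = fderiv ℝ (Jop W) q (semispray G q) - fderiv ℝ (semispray G) q (Jop W q) := rfl
  have h2 : lie (semispray G) W q
      = fderiv ℝ W q (semispray G q) - fderiv ℝ (semispray G) q (W q) := rfl
  have hJW : Jop W q = ((0 : Fin n → ℝ), (W q).1) := rfl
  show lie (semispray G) (Jop W) q - Jop (lie (semispray G) W) q = _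
  rw [h1, fderiv_Jop_apply hW, fderiv_S_apply hG hq, hJW]
  have h3 : Jop (lie (semispray G) W) q = (0, (lie (semispray G) W q).1) := rfl
  rw [h3, h2, fderiv_S_apply hG hq]
  ext i <;> simp <;> ring

lemma hop_eq (hG : ContDiffOn ℝ (⊤ : ℕ∞) G (Slit n)) {W : TB n → TB n} {q : TB n}
    (hq : q ∈ Slit n) (hW : DifferentiableAt ℝ W q) :
    hop (semispray G) W q
      = ((W q).1, -(fderiv ℝ G q ((0 : Fin n → ℝ), (W q).1))) := by
  show (1/2 : ℝ) • (W q - LSJ (semispray G) W q) = _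
  rw [LSJ_eq hG hq hW]
  ext i <;> simp [Prod.sub_def] <;> ring

lemma vop_eq (hG : ContDiffOn ℝ (⊤ : ℕ∞) G (Slit n)) {W : TB n → TB n} {q : TB n}
    (hq : q ∈ Slit n) (hW : DifferentiableAt ℝ W q) :
    vop (semispray G) W q
      = (0, (W q).2 + fderiv ℝ G q ((0 : Fin n → ℝ), (W q).1)) := by
  show (1/2 : ℝ) • (W q + LSJ (semispray G) W q) = _
  rw [LSJ_eq hG hq hW]
  ext i <;> simp [Prod.add_def] <;> ring

end Helm
namespace Helm

variable {n : ℕ} {G : TB n → (Fin n → ℝ)} {θ : TB n → (TB n →L[ℝ] ℝ)}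

/-- Tensoriality of the exterior derivative of a 1-form. -/
lemma dOne_eval {U V : TB n → TB n} {q : TB n}
    (hθ : DifferentiableAt ℝ θ q) (hU : DifferentiableAt ℝ U q)
    (hV : DifferentiableAt ℝ V q) :
    dOne (evalOne θ) U V q
      = fderiv ℝ θ q (U q) (V q) - fderiv ℝ θ q (V q) (U q) := by
  have e1 : evalOne θ U = fun z => θ z (U z) := rfl
  have e2 : evalOne θ V = fun z => θ z (V z) := rfl
  show actT U (evalOne θ V) q - actT V (evalOne θ U) q - evalOne θ (lie U V) q = _
  have h1 : actT U (evalOne θ V) q = fderiv ℝ (fun z => θ z (V z)) q (U q) := rfl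
  have h2 : actT V (evalOne θ U) q = fderiv ℝ (fun z => θ z (U z)) q (V q) := rfl
  have h3 : evalOne θ (lie U V) q
      = θ q (fderiv ℝ V q (U q) - fderiv ℝ U q (V q)) := rfl
  rw [h1, h2, h3, fderiv_clm_apply hθ hV, fderiv_clm_apply hθ hU]
  simp
  ring

/-- The 1-form representing `L_S θ`. -/
def eta (G : TB n → (Fin n → ℝ)) (θ : TB n → (TB n →L[ℝ] ℝ)) :
    TB n → (TB n →L[ℝ] ℝ) :=
  fun q => fderiv ℝ θ q (semispray G q) + (θ q).comp (fderiv ℝ (semispray G) q)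

lemma smOn_eta (hG : ContDiffOn ℝ (⊤ : ℕ∞) G (Slit n)) (hθ : ContDiffOn ℝ (⊤ : ℕ∞) θ (Slit n)) :
    ContDiffOn ℝ (⊤ : ℕ∞) (eta G θ) (Slit n) :=
  ((smOn_fderiv hθ).clm_apply (smOn_S hG)).add (hθ.clm_comp (smOn_fderiv (smOn_S hG)))

lemma LStheta_eq_eta (hG : ContDiffOn ℝ (⊤ : ℕ∞) G (Slit n)) {q : TB n} (hq : q ∈ Slit n)
    (hθ : DifferentiableAt ℝ θ q) {Z : TB n → TB n} (hZ : DifferentiableAt ℝ Z q) :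
    LStheta (semispray G) θ Z q = eta G θ q (Z q) := by
  have h1 : LStheta (semispray G) θ Z q
      = fderiv ℝ (fun z => θ z (Z z)) q (semispray G q)
        - θ q (fderiv ℝ Z q (semispray G q) - fderiv ℝ (semispray G) q (Z q)) := rfl
  rw [h1, fderiv_clm_apply hθ hZ]
  simp [eta]

end Helm
namespace Helm

variable {n : ℕ} {G : TB n → (Fin n → ℝ)} {θ : TB n → (TB n →L[ℝ] ℝ)}

set_option maxHeartbeats 1000000 in
lemma key_reduction (hG : ContDiffOn ℝ (⊤ : ℕ∞) G (Slit n)) (hθ : ContDiffOn ℝ (⊤ : ℕ∞) θ (Slit n))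
    {X Y : TB n → TB n} (hX : ContDiffOn ℝ (⊤ : ℕ∞) X (Slit n)) (hY : ContDiffOn ℝ (⊤ : ℕ∞) Y (Slit n))
    {p : TB n} (hp : p ∈ Slit n) :
    dOne (LStheta (semispray G) θ) X Y p
      = actT (semispray G) (dOne (evalOne θ) X Y) p
        - (fderiv ℝ θ p (lie (semispray G) X p) (Y p)
           - fderiv ℝ θ p (Y p) (lie (semispray G) X p))
        - (fderiv ℝ θ p (X p) (lie (semispray G) Y p)
           - fderiv ℝ θ p (lie (semispray G) Y p) (X p)) := by
  set S := semispray G with hSdef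
  have hθp : DifferentiableAt ℝ θ p := da hθ hp
  have hXp : DifferentiableAt ℝ X p := da hX hp
  have hYp : DifferentiableAt ℝ Y p := da hY hp
  have hSsm : ContDiffOn ℝ (⊤ : ℕ∞) S (Slit n) := smOn_S hG
  have hSp : DifferentiableAt ℝ S p := da hSsm hp
  have hθ'p : DifferentiableAt ℝ (fderiv ℝ θ) p := da (smOn_fderiv hθ) hp
  have hS'p : DifferentiableAt ℝ (fderiv ℝ S) p := da (smOn_fderiv hSsm) hp
  -- Step A : rewrite `LStheta` as evaluation of `eta`
  have stepA : dOne (LStheta S θ) X Y p = dOne (evalOne (eta G θ)) X Y p := by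
    have hY' : ∀ z ∈ Slit n, LStheta S θ Y z = evalOne (eta G θ) Y z := fun z hz =>
      LStheta_eq_eta hG hz (da hθ hz) (da hY hz)
    have hX' : ∀ z ∈ Slit n, LStheta S θ X z = evalOne (eta G θ) X z := fun z hz =>
      LStheta_eq_eta hG hz (da hθ hz) (da hX hz)
    show actT X (LStheta S θ Y) p - actT Y (LStheta S θ X) p
        - LStheta S θ (lie X Y) p = _
    have e1 : actT X (LStheta S θ Y) p = actT X (evalOne (eta G θ) Y) p := by
      show fderiv ℝ (LStheta S θ Y) p (X p) = fderiv ℝ (evalOne (eta G θ) Y) p (X p)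
      rw [fderiv_congr_slit hY' hp]
    have e2 : actT Y (LStheta S θ X) p = actT Y (evalOne (eta G θ) X) p := by
      show fderiv ℝ (LStheta S θ X) p (Y p) = fderiv ℝ (evalOne (eta G θ) X) p (Y p)
      rw [fderiv_congr_slit hX' hp]
    have e3 : LStheta S θ (lie X Y) p = evalOne (eta G θ) (lie X Y) p :=
      LStheta_eq_eta hG hp hθp (da (smOn_lie hX hY) hp)
    rw [e1, e2, e3]
    rfl
  -- Step B : tensoriality for eta
  have hetap : DifferentiableAt ℝ (eta G θ) p := da (smOn_eta hG hθ) hp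
  have stepB : dOne (evalOne (eta G θ)) X Y p
      = fderiv ℝ (eta G θ) p (X p) (Y p) - fderiv ℝ (eta G θ) p (Y p) (X p) :=
    dOne_eval hetap hXp hYp
  -- Step C : derivative of eta
  have hA : HasFDerivAt (fun q => fderiv ℝ θ q (S q))
      ((fderiv ℝ θ p).comp (fderiv ℝ S p)
        + (fderiv ℝ (fderiv ℝ θ) p).flip (S p)) p :=
    hθ'p.hasFDerivAt.clm_apply hSp.hasFDerivAt
  have hB : HasFDerivAt (fun q => (θ q).comp (fderiv ℝ S q))
      (((ContinuousLinearMap.compL ℝ (TB n) (TB n) ℝ) (θ p)).comp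
          (fderiv ℝ (fderiv ℝ S) p)
        + ((ContinuousLinearMap.compL ℝ (TB n) (TB n) ℝ).flip
            (fderiv ℝ S p)).comp (fderiv ℝ θ p)) p :=
    hθp.hasFDerivAt.clm_comp hS'p.hasFDerivAt
  have hetaD : fderiv ℝ (eta G θ) p
      = ((fderiv ℝ θ p).comp (fderiv ℝ S p)
          + (fderiv ℝ (fderiv ℝ θ) p).flip (S p))
        + (((ContinuousLinearMap.compL ℝ (TB n) (TB n) ℝ) (θ p)).comp
              (fderiv ℝ (fderiv ℝ S) p)
            + ((ContinuousLinearMap.compL ℝ (TB n) (TB n) ℝ).flip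
                (fderiv ℝ S p)).comp (fderiv ℝ θ p)) := by
    have : HasFDerivAt (eta G θ) _ p := hA.add hB
    exact this.fderiv
  have etaD_apply : ∀ u v : TB n, fderiv ℝ (eta G θ) p u v
      = fderiv ℝ θ p (fderiv ℝ S p u) v
        + fderiv ℝ (fderiv ℝ θ) p u (S p) v
        + θ p (fderiv ℝ (fderiv ℝ S) p u v)
        + fderiv ℝ θ p u (fderiv ℝ S p v) := by
    intro u v
    rw [hetaD]
    simp
    ring
  -- Step D : derivative of dθ(X,Y) along S
  set g : TB n → ℝ :=
    fun q => fderiv ℝ θ q (X q) (Y q) - fderiv ℝ θ q (Y q) (X q) with hgdef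
  have stepD : actT S (dOne (evalOne θ) X Y) p = fderiv ℝ g p (S p) := by
    show fderiv ℝ (dOne (evalOne θ) X Y) p (S p) = _
    rw [fderiv_congr_slit (fun z hz => dOne_eval (da hθ hz) (da hX hz) (da hY hz)) hp]
  have hc1 : HasFDerivAt (fun q => fderiv ℝ θ q (X q))
      ((fderiv ℝ θ p).comp (fderiv ℝ X p)
        + (fderiv ℝ (fderiv ℝ θ) p).flip (X p)) p :=
    hθ'p.hasFDerivAt.clm_apply hXp.hasFDerivAt
  have hc2 : HasFDerivAt (fun q => fderiv ℝ θ q (Y q))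
      ((fderiv ℝ θ p).comp (fderiv ℝ Y p)
        + (fderiv ℝ (fderiv ℝ θ) p).flip (Y p)) p :=
    hθ'p.hasFDerivAt.clm_apply hYp.hasFDerivAt
  have hg1 : HasFDerivAt (fun q => fderiv ℝ θ q (X q) (Y q))
      ((fderiv ℝ θ p (X p)).comp (fderiv ℝ Y p)
        + ((fderiv ℝ θ p).comp (fderiv ℝ X p)
            + (fderiv ℝ (fderiv ℝ θ) p).flip (X p)).flip (Y p)) p :=
    hc1.clm_apply hYp.hasFDerivAt
  have hg2 : HasFDerivAt (fun q => fderiv ℝ θ q (Y q) (X q))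
      ((fderiv ℝ θ p (Y p)).comp (fderiv ℝ X p)
        + ((fderiv ℝ θ p).comp (fderiv ℝ Y p)
            + (fderiv ℝ (fderiv ℝ θ) p).flip (Y p)).flip (X p)) p :=
    hc2.clm_apply hXp.hasFDerivAt
  have gD_apply : fderiv ℝ g p (S p)
      = fderiv ℝ θ p (X p) (fderiv ℝ Y p (S p))
        + fderiv ℝ θ p (fderiv ℝ X p (S p)) (Y p)
        + fderiv ℝ (fderiv ℝ θ) p (S p) (X p) (Y p)
        - fderiv ℝ θ p (Y p) (fderiv ℝ X p (S p))
        - fderiv ℝ θ p (fderiv ℝ Y p (S p)) (X p)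
        - fderiv ℝ (fderiv ℝ θ) p (S p) (Y p) (X p) := by
    rw [hgdef]
    rw [(hg1.fun_sub hg2).fderiv]
    simp
    ring
  -- symmetry of second derivatives
  have symθ : ∀ u v : TB n,
      fderiv ℝ (fderiv ℝ θ) p u v = fderiv ℝ (fderiv ℝ θ) p v u :=
    fun u v => ((hθ.contDiffAt (slit_mem_nhds hp)).isSymmSndFDerivAt (by simp; exact WithTop.coe_le_coe.mpr (le_top : (2:ℕ∞) ≤ ⊤))) u v
  have symS : ∀ u v : TB n,
      fderiv ℝ (fderiv ℝ S) p u v = fderiv ℝ (fderiv ℝ S) p v u :=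
    fun u v => ((hSsm.contDiffAt (slit_mem_nhds hp)).isSymmSndFDerivAt (by simp; exact WithTop.coe_le_coe.mpr (le_top : (2:ℕ∞) ≤ ⊤))) u v
  -- assemble
  have lieX : lie S X p = fderiv ℝ X p (S p) - fderiv ℝ S p (X p) := rfl
  have lieY : lie S Y p = fderiv ℝ Y p (S p) - fderiv ℝ S p (Y p) := rfl
  rw [stepA, stepB, stepD, gD_apply, etaD_apply, etaD_apply, lieX, lieY]
  rw [symθ (X p) (S p), symθ (Y p) (S p), symS (X p) (Y p)]
  simp only [map_sub, ContinuousLinearMap.sub_apply]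
  ring

end Helm
namespace Helm

variable {n : ℕ} {G : TB n → (Fin n → ℝ)}

lemma hop_add_vop (S W : TB n → TB n) (z : TB n) :
    hop S W z + vop S W z = W z := by
  show (1/2 : ℝ) • (W z - LSJ S W z) + (1/2 : ℝ) • (W z + LSJ S W z) = W z
  module

lemma lie_S_split (hG : ContDiffOn ℝ (⊤ : ℕ∞) G (Slit n)) {X : TB n → TB n}
    (hX : ContDiffOn ℝ (⊤ : ℕ∞) X (Slit n)) {p : TB n} (hp : p ∈ Slit n) :
    lie (semispray G) X p
      = lie (semispray G) (hop (semispray G) X) p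
        + lie (semispray G) (vop (semispray G) X) p := by
  set S := semispray G
  have hSsm : ContDiffOn ℝ (⊤ : ℕ∞) S (Slit n) := smOn_S hG
  have hh : DifferentiableAt ℝ (hop S X) p := da (smOn_hop hSsm hX) hp
  have hv : DifferentiableAt ℝ (vop S X) p := da (smOn_vop hSsm hX) hp
  have hXeq : X = fun z => hop S X z + vop S X z :=
    funext fun z => (hop_add_vop S X z).symm
  have hdX : fderiv ℝ X p = fderiv ℝ (hop S X) p + fderiv ℝ (vop S X) p := by
    conv_lhs => rw [hXeq]
    exact fderiv_add hh hv
  show fderiv ℝ X p (S p) - fderiv ℝ S p (X p) = _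
  have hXp : X p = hop S X p + vop S X p := (hop_add_vop S X p).symm
  rw [hdX, hXp]
  show _ = (fderiv ℝ (hop S X) p (S p) - fderiv ℝ S p (hop S X p))
      + (fderiv ℝ (vop S X) p (S p) - fderiv ℝ S p (vop S X p))
  simp only [ContinuousLinearMap.add_apply, map_add]
  abel

lemma LSv_eq_neg_LSh (hG : ContDiffOn ℝ (⊤ : ℕ∞) G (Slit n)) {X : TB n → TB n}
    (hX : ContDiffOn ℝ (⊤ : ℕ∞) X (Slit n)) {p : TB n} (hp : p ∈ Slit n) :
    LSv (semispray G) X p = - LSh (semispray G) X p := by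
  set S := semispray G
  have e1 : LSh S X p + LSv S X p
      = (lie S (hop S X) p + lie S (vop S X) p)
        - (hop S (lie S X) p + vop S (lie S X) p) := by
    show (lie S (hop S X) p - hop S (lie S X) p)
        + (lie S (vop S X) p - vop S (lie S X) p) = _
    abel
  have e2 : LSh S X p + LSv S X p = 0 := by
    rw [e1, ← lie_S_split hG hX hp, hop_add_vop]
    exact sub_self _
  rw [add_comm] at e2
  exact eq_neg_of_add_eq_zero_left e2

lemma lie_hop_eq (S X : TB n → TB n) (z : TB n) :
    lie S (hop S X) z = LSh S X z + hop S (lie S X) z := by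
  show _ = (lie S (hop S X) z - hop S (lie S X) z) + hop S (lie S X) z
  abel

lemma lie_vop_eq (S X : TB n → TB n) (z : TB n) :
    lie S (vop S X) z = LSv S X z + vop S (lie S X) z := by
  show _ = (lie S (vop S X) z - vop S (lie S X) z) + vop S (lie S X) z
  abel

lemma Nadd (q : TB n) (a b : Fin n → ℝ) :
    fderiv ℝ G q ((0 : Fin n → ℝ), a + b)
      = fderiv ℝ G q (0, a) + fderiv ℝ G q (0, b) := by
  have h : ((0 : Fin n → ℝ), a + b) = (((0 : Fin n → ℝ), a) : TB n) + (0, b) := by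
    ext <;> simp
  rw [h, map_add]

lemma Nneg (q : TB n) (a : Fin n → ℝ) :
    fderiv ℝ G q ((0 : Fin n → ℝ), -a) = - fderiv ℝ G q (0, a) := by
  have h : ((0 : Fin n → ℝ), -a) = -(((0 : Fin n → ℝ), a) : TB n) := by ext <;> simp
  rw [h, map_neg]

lemma vop_lie_hop (hG : ContDiffOn ℝ (⊤ : ℕ∞) G (Slit n)) {X : TB n → TB n}
    (hX : ContDiffOn ℝ (⊤ : ℕ∞) X (Slit n)) {p : TB n} (hp : p ∈ Slit n) :
    vop (semispray G) (lie (semispray G) (hop (semispray G) X)) p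
      = Phiop (semispray G) X p := by
  set S := semispray G
  have hSsm : ContDiffOn ℝ (⊤ : ℕ∞) S (Slit n) := smOn_S hG
  have hW1 : DifferentiableAt ℝ (lie S (hop S X)) p :=
    da (smOn_lie hSsm (smOn_hop hSsm hX)) hp
  have hW2 : DifferentiableAt ℝ (LSh S X) p := da (smOn_LSh hSsm hX) hp
  have hlie : DifferentiableAt ℝ (lie S X) p := da (smOn_lie hSsm hX) hp
  have ePhi : Phiop S X p = vop S (LSh S X) p := rfl
  rw [ePhi, vop_eq hG hp hW1, vop_eq hG hp hW2, lie_hop_eq S X p, hop_eq hG hp hlie]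
  refine Prod.ext rfl ?_
  show (LSh S X p + ((lie S X p).1, -(fderiv ℝ G p (0, (lie S X p).1)))).2
      + fderiv ℝ G p (0, (LSh S X p + ((lie S X p).1,
          -(fderiv ℝ G p (0, (lie S X p).1)))).1)
    = (LSh S X p).2 + fderiv ℝ G p (0, (LSh S X p).1)
  simp only [Prod.fst_add, Prod.snd_add]
  rw [Nadd]
  abel

lemma hop_lie_vop (hG : ContDiffOn ℝ (⊤ : ℕ∞) G (Slit n)) {X : TB n → TB n}
    (hX : ContDiffOn ℝ (⊤ : ℕ∞) X (Slit n)) {p : TB n} (hp : p ∈ Slit n) :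
    hop (semispray G) (lie (semispray G) (vop (semispray G) X)) p
      = - hop (semispray G) (LSh (semispray G) X) p := by
  set S := semispray G
  have hSsm : ContDiffOn ℝ (⊤ : ℕ∞) S (Slit n) := smOn_S hG
  have hW1 : DifferentiableAt ℝ (lie S (vop S X)) p :=
    da (smOn_lie hSsm (smOn_vop hSsm hX)) hp
  have hW2 : DifferentiableAt ℝ (LSh S X) p := da (smOn_LSh hSsm hX) hp
  have hlie : DifferentiableAt ℝ (lie S X) p := da (smOn_lie hSsm hX) hp
  rw [hop_eq hG hp hW1, hop_eq hG hp hW2, lie_vop_eq S X p, vop_eq hG hp hlie,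
    LSv_eq_neg_LSh hG hX hp]
  refine Prod.ext ?_ ?_
  · show (- LSh S X p + ((0 : Fin n → ℝ), _)).1 = -((LSh S X p).1)
    simp only [Prod.fst_add, Prod.fst_neg]
    abel
  · show -(fderiv ℝ G p (0, (- LSh S X p + ((0 : Fin n → ℝ), _)).1))
        = -(-(fderiv ℝ G p (0, (LSh S X p).1)))
    simp only [Prod.fst_add, Prod.fst_neg, add_zero, Nneg, neg_neg]

lemma nab_lie (hG : ContDiffOn ℝ (⊤ : ℕ∞) G (Slit n)) {X : TB n → TB n}
    (hX : ContDiffOn ℝ (⊤ : ℕ∞) X (Slit n)) {p : TB n} (hp : p ∈ Slit n) :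
    nabV (semispray G) X p - lie (semispray G) X p
      = hop (semispray G) (LSh (semispray G) X) p - Phiop (semispray G) X p := by
  set S := semispray G
  have e0 : nabV S X p
      = hop S (lie S (hop S X)) p + vop S (lie S (vop S X)) p := rfl
  have e1 : hop S (lie S (hop S X)) p
      = lie S (hop S X) p - vop S (lie S (hop S X)) p :=
    eq_sub_of_add_eq (hop_add_vop S (lie S (hop S X)) p)
  have e2 : vop S (lie S (vop S X)) p
      = lie S (vop S X) p - hop S (lie S (vop S X)) p :=
    eq_sub_of_add_eq' (hop_add_vop S (lie S (vop S X)) p)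
  rw [e0, e1, e2, vop_lie_hop hG hX hp, hop_lie_vop hG hX hp,
    lie_S_split hG hX hp]
  abel

lemma fst_fderiv {f : TB n → TB n} {q : TB n} (hf : DifferentiableAt ℝ f q)
    (w : TB n) : (fderiv ℝ f q w).1 = fderiv ℝ (fun z => (f z).1) q w := by
  rw [(hf.hasFDerivAt.fst).fderiv]
  rfl

lemma LSh_fst (hG : ContDiffOn ℝ (⊤ : ℕ∞) G (Slit n)) {X : TB n → TB n}
    (hX : ContDiffOn ℝ (⊤ : ℕ∞) X (Slit n)) {p : TB n} (hp : p ∈ Slit n) :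
    (LSh (semispray G) X p).1
      = (X p).2 + fderiv ℝ G p ((0 : Fin n → ℝ), (X p).1) := by
  set S := semispray G
  have hSsm : ContDiffOn ℝ (⊤ : ℕ∞) S (Slit n) := smOn_S hG
  have hlie : DifferentiableAt ℝ (lie S X) p := da (smOn_lie hSsm hX) hp
  have hhX : DifferentiableAt ℝ (hop S X) p := da (smOn_hop hSsm hX) hp
  have hXp : DifferentiableAt ℝ X p := da hX hp
  have a1 : (fderiv ℝ (hop S X) p (S p)).1 = (fderiv ℝ X p (S p)).1 := by
    rw [fst_fderiv hhX, fst_fderiv hXp]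
    rw [fderiv_congr_slit (f := fun z => (hop S X z).1) (g := fun z => (X z).1)
      (fun z hz => by
        show (hop (semispray G) X z).1 = (X z).1
        rw [hop_eq hG hz (da hX hz)]) hp]
  have a2 : (fderiv ℝ S p (hop S X p)).1 = (hop S X p).2 := by
    rw [fderiv_S_apply hG hp]
  have a3 : (fderiv ℝ S p (X p)).1 = (X p).2 := by
    rw [fderiv_S_apply hG hp]
  have e1 : LSh S X p = lie S (hop S X) p - hop S (lie S X) p := rfl
  have e2 : lie S (hop S X) p
      = fderiv ℝ (hop S X) p (S p) - fderiv ℝ S p (hop S X p) := rfl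
  have e3 : lie S X p = fderiv ℝ X p (S p) - fderiv ℝ S p (X p) := rfl
  rw [e1, hop_eq hG hp hlie]
  simp only [Prod.fst_sub]
  rw [e2]
  simp only [Prod.fst_sub]
  rw [a1, a2, hop_eq hG hp hXp, e3]
  simp only [Prod.fst_sub]
  rw [a3]
  abel

lemma Phi_fst (hG : ContDiffOn ℝ (⊤ : ℕ∞) G (Slit n)) {X : TB n → TB n}
    (hX : ContDiffOn ℝ (⊤ : ℕ∞) X (Slit n)) {q : TB n} (hq : q ∈ Slit n) :
    (Phiop (semispray G) X q).1 = 0 := by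
  have h : Phiop (semispray G) X q = vop (semispray G) (LSh (semispray G) X) q := rfl
  rw [h, vop_eq hG hq (da (smOn_LSh (smOn_S hG) hX) hq)]

end Helm
namespace Helm

variable {n : ℕ} {G : TB n → (Fin n → ℝ)} {θ : TB n → (TB n →L[ℝ] ℝ)}

/-- Antisymmetrized derivative of a 1-form (the 2-form `dθ` at a point). -/
def bb (θ : TB n → (TB n →L[ℝ] ℝ)) (p : TB n) (u v : TB n) : ℝ :=
  fderiv ℝ θ p u v - fderiv ℝ θ p v u

lemma bb_add_right (p u v w) : bb θ p u (v + w) = bb θ p u v + bb θ p u w := by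
  simp only [bb, map_add, ContinuousLinearMap.add_apply]; ring

lemma bb_sub_left (p u v w) : bb θ p (u - w) v = bb θ p u v - bb θ p w v := by
  simp only [bb, map_sub, ContinuousLinearMap.sub_apply]; ring

lemma bb_sub_right (p u v w) : bb θ p u (v - w) = bb θ p u v - bb θ p u w := by
  simp only [bb, map_sub, ContinuousLinearMap.sub_apply]; ring

lemma dOne_eval_bb {U V : TB n → TB n} {q : TB n}
    (hθ : DifferentiableAt ℝ θ q) (hU : DifferentiableAt ℝ U q)
    (hV : DifferentiableAt ℝ V q) :
    dOne (evalOne θ) U V q = bb θ q (U q) (V q) :=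
  dOne_eval hθ hU hV

lemma actT_vanish {f : TB n → ℝ} (h : ∀ z ∈ Slit n, f z = 0) {p : TB n}
    (hp : p ∈ Slit n) (W : TB n → TB n) : actT W f p = 0 := by
  show fderiv ℝ f p (W p) = 0
  rw [fderiv_congr_slit (g := fun _ => (0:ℝ)) h hp]
  simp

lemma fderiv_apply_const {p : TB n} (hθp : DifferentiableAt ℝ θ p) (v w : TB n) :
    fderiv ℝ (fun z => θ z v) p w = fderiv ℝ θ p w v := by
  rw [fderiv_clm_apply hθp (differentiableAt_const v)]
  simp

lemma lie_const (u v : TB n) : lie (fun _ => u) (fun _ => v) = fun _ => (0 : TB n) := by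
  funext z
  simp [lie]

end Helm

open Helm in
theorem helmholtz_implies_LStheta_closed' (n : ℕ)
    (G : TB n → (Fin n → ℝ)) (hG : ContDiffOn ℝ (⊤ : ℕ∞) G (Slit n))
    (θ : TB n → (TB n →L[ℝ] ℝ)) (hθ : ContDiffOn ℝ (⊤ : ℕ∞) θ (Slit n))
    (hsb : ∀ p ∈ Slit n, ∀ ξ : TB n, ξ.1 = 0 → θ p ξ = 0)
    (hdh : ∀ X Y : TB n → TB n,
      ContDiffOn ℝ (⊤ : ℕ∞) X (Slit n) → ContDiffOn ℝ (⊤ : ℕ∞) Y (Slit n) →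
      ∀ p ∈ Slit n, dAOneForm (hop (semispray G)) θ X Y p = 0)
    (hdJ : ∀ X Y : TB n → TB n,
      ContDiffOn ℝ (⊤ : ℕ∞) X (Slit n) → ContDiffOn ℝ (⊤ : ℕ∞) Y (Slit n) →
      ∀ p ∈ Slit n, dAOneForm Jop θ X Y p = 0)
    (hnab : ∀ X Y : TB n → TB n,
      ContDiffOn ℝ (⊤ : ℕ∞) X (Slit n) → ContDiffOn ℝ (⊤ : ℕ∞) Y (Slit n) →
      ∀ p ∈ Slit n, nablaDtheta (semispray G) θ X Y p = 0)
    (hdPhi : ∀ X Y : TB n → TB n,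
      ContDiffOn ℝ (⊤ : ℕ∞) X (Slit n) → ContDiffOn ℝ (⊤ : ℕ∞) Y (Slit n) →
      ∀ p ∈ Slit n, dAOneForm (Phiop (semispray G)) θ X Y p = 0) :
    ∀ X Y : TB n → TB n, ContDiffOn ℝ (⊤ : ℕ∞) X (Slit n) → ContDiffOn ℝ (⊤ : ℕ∞) Y (Slit n) →
      ∀ p ∈ Slit n, dOne (LStheta (semispray G) θ) X Y p = 0 := by
  intro X Y hX hY p hp
  have hSsm : ContDiffOn ℝ (⊤ : ℕ∞) (semispray G) (Slit n) := smOn_S hG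
  have hθp : DifferentiableAt ℝ θ p := da hθ hp
  -- abbreviation for the horizontal projection of a vector at p
  set hvec : TB n → TB n :=
    fun u => (u.1, -(fderiv ℝ G p ((0 : Fin n → ℝ), u.1))) with hvecdef
  -- (R1) : relation from d_J θ = 0
  have r1 : ∀ u v : TB n,
      bb θ p ((0 : Fin n → ℝ), u.1) v + bb θ p u ((0 : Fin n → ℝ), v.1) = 0 := by
    intro u v
    have h0 := hdJ (fun _ => u) (fun _ => v) contDiffOn_const contDiffOn_const p hp
    have e1 : dOne (evalOne θ) (Jop (fun _ => u)) (fun _ => v) p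
        = bb θ p ((0 : Fin n → ℝ), u.1) v :=
      dOne_eval_bb hθp (differentiableAt_const _) (differentiableAt_const _)
    have e2 : dOne (evalOne θ) (fun _ => u) (Jop (fun _ => v)) p
        = bb θ p u ((0 : Fin n → ℝ), v.1) :=
      dOne_eval_bb hθp (differentiableAt_const _) (differentiableAt_const _)
    have e3 : dOne (fun Z => evalOne θ (Jop Z)) (fun _ => u) (fun _ => v) p = 0 := by
      show actT (fun _ => u) (evalOne θ (Jop (fun _ => v))) p
          - actT (fun _ => v) (evalOne θ (Jop (fun _ => u))) p
          - evalOne θ (Jop (lie (fun _ => u) (fun _ => v))) p = 0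
      have z1 : actT (fun _ => u) (evalOne θ (Jop (fun _ => v))) p = 0 :=
        actT_vanish (f := evalOne θ (Jop (fun _ => v)))
          (fun z hz => hsb z hz _ rfl) hp _
      have z2 : actT (fun _ => v) (evalOne θ (Jop (fun _ => u))) p = 0 :=
        actT_vanish (f := evalOne θ (Jop (fun _ => u)))
          (fun z hz => hsb z hz _ rfl) hp _
      have z3 : evalOne θ (Jop (lie (fun _ => u) (fun _ => v))) p = 0 :=
        hsb p hp _ rfl
      rw [z1, z2, z3]; ring
    simp only [dAOneForm, Pi.sub_apply, Pi.add_apply] at h0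
    rw [e1, e2, e3] at h0
    linarith
  -- (R2) : relation from d_h θ = 0
  have r2 : ∀ u v : TB n,
      bb θ p (hvec u) v + bb θ p u (hvec v) = bb θ p u v := by
    intro u v
    have h0 := hdh (fun _ => u) (fun _ => v) contDiffOn_const contDiffOn_const p hp
    have hhu : DifferentiableAt ℝ (hop (semispray G) (fun _ => u)) p :=
      da (smOn_hop hSsm contDiffOn_const) hp
    have hhv : DifferentiableAt ℝ (hop (semispray G) (fun _ => v)) p :=
      da (smOn_hop hSsm contDiffOn_const) hp
    have e1 : dOne (evalOne θ) (hop (semispray G) (fun _ => u)) (fun _ => v) p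
        = bb θ p (hvec u) v := by
      rw [dOne_eval_bb hθp hhu (differentiableAt_const _),
        hop_eq hG hp (differentiableAt_const u)]
    have e2 : dOne (evalOne θ) (fun _ => u) (hop (semispray G) (fun _ => v)) p
        = bb θ p u (hvec v) := by
      rw [dOne_eval_bb hθp (differentiableAt_const _) hhv,
        hop_eq hG hp (differentiableAt_const v)]
    have e3 : dOne (fun Z => evalOne θ (hop (semispray G) Z))
        (fun _ => u) (fun _ => v) p = bb θ p u v := by
      show actT (fun _ => u) (evalOne θ (hop (semispray G) (fun _ => v))) p
          - actT (fun _ => v) (evalOne θ (hop (semispray G) (fun _ => u))) p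
          - evalOne θ (hop (semispray G) (lie (fun _ => u) (fun _ => v))) p = _
      have c1 : ∀ w : TB n,
          ∀ z ∈ Slit n, evalOne θ (hop (semispray G) (fun _ => w)) z = θ z w := by
        intro w z hz
        show θ z (hop (semispray G) (fun _ => w) z) = θ z w
        rw [hop_eq hG hz (differentiableAt_const w)]
        have : θ z w - θ z ((w.1, -(fderiv ℝ G z ((0 : Fin n → ℝ), w.1)))) = 0 := by
          rw [← map_sub]
          exact hsb z hz _ (by simp)
        linarith
      have a1 : actT (fun _ => u) (evalOne θ (hop (semispray G) (fun _ => v))) p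
          = fderiv ℝ θ p u v := by
        show fderiv ℝ (evalOne θ (hop (semispray G) (fun _ => v))) p u = _
        rw [fderiv_congr_slit (g := fun z => θ z v) (c1 v) hp,
          fderiv_apply_const hθp]
      have a2 : actT (fun _ => v) (evalOne θ (hop (semispray G) (fun _ => u))) p
          = fderiv ℝ θ p v u := by
        show fderiv ℝ (evalOne θ (hop (semispray G) (fun _ => u))) p v = _
        rw [fderiv_congr_slit (g := fun z => θ z u) (c1 u) hp,
          fderiv_apply_const hθp]
      have a3 : evalOne θ (hop (semispray G) (lie (fun _ => u) (fun _ => v))) p = 0 := by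
        show θ p (hop (semispray G) (lie (fun _ => u) (fun _ => v)) p) = 0
        rw [lie_const, hop_eq hG hp (differentiableAt_const _)]
        exact hsb p hp _ rfl
      rw [a1, a2, a3]
      show _ = fderiv ℝ θ p u v - fderiv ℝ θ p v u
      ring
    simp only [dAOneForm, Pi.sub_apply, Pi.add_apply] at h0
    rw [e1, e2, e3] at h0
    linarith
  -- horizontal-horizontal vanishing
  have rhh : ∀ u v : TB n, bb θ p (hvec u) (hvec v) = 0 := by
    intro u v
    have h := r2 (hvec u) (hvec v)
    have hu : hvec (hvec u) = hvec u := rfl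
    have hv : hvec (hvec v) = hvec v := rfl
    rw [hu, hv] at h
    linarith
  -- (R3) : relation from d_Φ θ = 0
  have r3 : bb θ p (Phiop (semispray G) X p) (Y p)
      + bb θ p (X p) (Phiop (semispray G) Y p) = 0 := by
    have h0 := hdPhi X Y hX hY p hp
    have hPX : DifferentiableAt ℝ (Phiop (semispray G) X) p :=
      da (smOn_Phi hSsm hX) hp
    have hPY : DifferentiableAt ℝ (Phiop (semispray G) Y) p :=
      da (smOn_Phi hSsm hY) hp
    have e1 : dOne (evalOne θ) (Phiop (semispray G) X) Y p
        = bb θ p (Phiop (semispray G) X p) (Y p) :=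
      dOne_eval_bb hθp hPX (da hY hp)
    have e2 : dOne (evalOne θ) X (Phiop (semispray G) Y) p
        = bb θ p (X p) (Phiop (semispray G) Y p) :=
      dOne_eval_bb hθp (da hX hp) hPY
    have e3 : dOne (fun Z => evalOne θ (Phiop (semispray G) Z)) X Y p = 0 := by
      show actT X (evalOne θ (Phiop (semispray G) Y)) p
          - actT Y (evalOne θ (Phiop (semispray G) X)) p
          - evalOne θ (Phiop (semispray G) (lie X Y)) p = 0
      have z1 : actT X (evalOne θ (Phiop (semispray G) Y)) p = 0 :=
        actT_vanish (f := evalOne θ (Phiop (semispray G) Y))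
          (fun z hz => hsb z hz _ (Phi_fst hG hY hz)) hp _
      have z2 : actT Y (evalOne θ (Phiop (semispray G) X)) p = 0 :=
        actT_vanish (f := evalOne θ (Phiop (semispray G) X))
          (fun z hz => hsb z hz _ (Phi_fst hG hX hz)) hp _
      have z3 : evalOne θ (Phiop (semispray G) (lie X Y)) p = 0 :=
        hsb p hp _ (Phi_fst hG (smOn_lie hX hY) hp)
      rw [z1, z2, z3]; ring
    simp only [dAOneForm, Pi.sub_apply, Pi.add_apply] at h0
    rw [e1, e2, e3] at h0
    linarith
  -- ∇dθ = 0 : derivative along S of dθ(X,Y)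
  have o1 : actT (semispray G) (dOne (evalOne θ) X Y) p
      = bb θ p (nabV (semispray G) X p) (Y p)
        + bb θ p (X p) (nabV (semispray G) Y p) := by
    have h0 := hnab X Y hX hY p hp
    simp only [nablaDtheta, Pi.sub_apply] at h0
    rw [dOne_eval_bb hθp (da (smOn_nabV hSsm hX) hp) (da hY hp),
        dOne_eval_bb hθp (da hX hp) (da (smOn_nabV hSsm hY) hp)] at h0
    linarith
  -- Cartan reduction
  have K := key_reduction hG hθ hX hY hp
  have K' : dOne (LStheta (semispray G) θ) X Y p
      = bb θ p (nabV (semispray G) X p - lie (semispray G) X p) (Y p)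
        + bb θ p (X p) (nabV (semispray G) Y p - lie (semispray G) Y p) := by
    rw [K, o1, bb_sub_left, bb_sub_right]
    show _ - bb θ p (lie (semispray G) X p) (Y p)
        - bb θ p (X p) (lie (semispray G) Y p) = _
    ring
  rw [K', nab_lie hG hX hp, nab_lie hG hY hp, bb_sub_left, bb_sub_right]
  -- split horizontal and Φ parts
  have hLX : hop (semispray G) (LSh (semispray G) X) p
      = hvec (LSh (semispray G) X p) :=
    hop_eq hG hp (da (smOn_LSh hSsm hX) hp)
  have hLY : hop (semispray G) (LSh (semispray G) Y) p
      = hvec (LSh (semispray G) Y p) :=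
    hop_eq hG hp (da (smOn_LSh hSsm hY) hp)
  rw [hLX, hLY]
  -- the horizontal part vanishes
  set a := LSh (semispray G) X p with hadef
  set b := LSh (semispray G) Y p with hbdef
  have hafst : a.1 = (X p).2 + fderiv ℝ G p ((0 : Fin n → ℝ), (X p).1) :=
    LSh_fst hG hX hp
  have hbfst : b.1 = (Y p).2 + fderiv ℝ G p ((0 : Fin n → ℝ), (Y p).1) :=
    LSh_fst hG hY hp
  have hv : Y p = hvec (Y p) + ((0 : Fin n → ℝ), b.1) := by
    rw [hbfst]
    refine Prod.ext ?_ ?_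
    · show (Y p).1 = (Y p).1 + 0
      rw [add_zero]
    · show (Y p).2 = -(fderiv ℝ G p ((0 : Fin n → ℝ), (Y p).1))
          + ((Y p).2 + fderiv ℝ G p ((0 : Fin n → ℝ), (Y p).1))
      abel
  have hu : ((0 : Fin n → ℝ), a.1) = X p - hvec (X p) := by
    rw [hafst]
    refine Prod.ext ?_ ?_
    · show (0 : Fin n → ℝ) = (X p).1 - (X p).1
      rw [sub_self]
    · show (X p).2 + fderiv ℝ G p ((0 : Fin n → ℝ), (X p).1)
          = (X p).2 - -(fderiv ℝ G p ((0 : Fin n → ℝ), (X p).1))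
      abel
  have hr1 := r1 (hvec a) (hvec b)
  have hha : (hvec a).1 = a.1 := rfl
  have hhb : (hvec b).1 = b.1 := rfl
  rw [hha, hhb, hu] at hr1
  have horiz : bb θ p (hvec a) (Y p) + bb θ p (X p) (hvec b) = 0 := by
    have s1 : bb θ p (hvec a) (Y p)
        = bb θ p (hvec a) (hvec (Y p)) + bb θ p (hvec a) ((0 : Fin n → ℝ), b.1) := by
      conv_lhs => rw [hv]
      exact bb_add_right p _ _ _
    rw [rhh a (Y p)] at s1
    have s2 : bb θ p (X p - hvec (X p)) (hvec b)
        = bb θ p (X p) (hvec b) - bb θ p (hvec (X p)) (hvec b) :=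
      bb_sub_left p _ _ _
    rw [rhh (X p) b] at s2
    -- hr1 : bb (X p - hvec (X p)) (hvec b) + bb (hvec a) ((0, b.1)) = 0
    linarith [hr1, s1, s2]
  linarith [horiz, r3]

/-- **Helmholtz conditions imply `L_S θ` closed.**  Let `S` be a semispray and `θ`
a semi-basic `1`-form on `TM \ {0}` satisfying `d_h θ = 0`, `d_J θ = 0`,
`∇(dθ) = 0` and `d_Φ θ = 0`, where `∇` is the dynamical covariant derivative and
`Φ` the Jacobi endomorphism.  Then the `1`-form `L_S θ` is closed. -/
theorem helmholtz_implies_LStheta_closed (n : ℕ)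
    (G : TB n → (Fin n → ℝ)) (hG : ContDiffOn ℝ (⊤ : ℕ∞) G (Slit n))
    (θ : TB n → (TB n →L[ℝ] ℝ)) (hθ : ContDiffOn ℝ (⊤ : ℕ∞) θ (Slit n))
    (hsb : ∀ p ∈ Slit n, ∀ ξ : TB n, ξ.1 = 0 → θ p ξ = 0)
    (hdh : ∀ X Y : TB n → TB n,
      ContDiffOn ℝ (⊤ : ℕ∞) X (Slit n) → ContDiffOn ℝ (⊤ : ℕ∞) Y (Slit n) →
      ∀ p ∈ Slit n, dAOneForm (hop (semispray G)) θ X Y p = 0)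
    (hdJ : ∀ X Y : TB n → TB n,
      ContDiffOn ℝ (⊤ : ℕ∞) X (Slit n) → ContDiffOn ℝ (⊤ : ℕ∞) Y (Slit n) →
      ∀ p ∈ Slit n, dAOneForm Jop θ X Y p = 0)
    (hnab : ∀ X Y : TB n → TB n,
      ContDiffOn ℝ (⊤ : ℕ∞) X (Slit n) → ContDiffOn ℝ (⊤ : ℕ∞) Y (Slit n) →
      ∀ p ∈ Slit n, nablaDtheta (semispray G) θ X Y p = 0)
    (hdPhi : ∀ X Y : TB n → TB n,
      ContDiffOn ℝ (⊤ : ℕ∞) X (Slit n) → ContDiffOn ℝ (⊤ : ℕ∞) Y (Slit n) →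
      ∀ p ∈ Slit n, dAOneForm (Phiop (semispray G)) θ X Y p = 0) :
    ∀ X Y : TB n → TB n, ContDiffOn ℝ (⊤ : ℕ∞) X (Slit n) → ContDiffOn ℝ (⊤ : ℕ∞) Y (Slit n) →
      ∀ p ∈ Slit n, dOne (LStheta (semispray G) θ) X Y p = 0 := by
  exact helmholtz_implies_LStheta_closed' n G hG θ hθ hsb hdh hdJ hnab hdPhi

end
end
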